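/- arXiv:2408.14981 — 6 statements merged into one kernel-verified Lean document; each statement's English description precedes it below -/
import Mathlib

section
/- There exist topological dynamical systems (X, T) and (Y, S), with π : X × Y → Y the projection onto the second coordinate (a factor map from (X × Y, T × S) to (Y, S)), and a continuous function f ∈ C(X × Y), such that α(f) = β(f) = γ(f) = −1 while δ(f) = 0; in particular α(f) = β(f) = γ(f) < δ(f). Concretely one may take X = {−1, +1} with T the identity, Y = ℤ ∪ {−∞, +∞} the two-point compactification of ℤ with S the map y ↦ y + 1 on ℤ fixing ±∞, and f(x, y) = −sgn(x·y) (with f(x, y) = 0 when y = 0). -/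
/-- A topological dynamical system: a compact metrizable space (with its Borel
σ-algebra) together with a homeomorphism of it. -/
structure TDS where
  carrier : Type
  [topo : TopologicalSpace carrier]
  [comp : CompactSpace carrier]
  [metr : TopologicalSpace.MetrizableSpace carrier]
  [meas : MeasurableSpace carrier]
  [borel : BorelSpace carrier]
  homeo : carrier ≃ₜ carrier

attribute [instance] TDS.topo TDS.comp TDS.metr TDS.meas TDS.borel

open MeasureTheory Filter Topology
open scoped ENNReal NNReal

noncomputable section

/-- Birkhoff average `A_k f(x, y) = (1/k) Σ_{j<k} f(T^j x, S^j y)`. -/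
def birk2 {X Y : Type*} (T : X → X) (S : Y → Y) (f : X × Y → ℝ) (k : ℕ) (x : X) (y : Y) : ℝ :=
  (k : ℝ)⁻¹ * ∑ j ∈ Finset.range k, f ((Prod.map T S)^[j] (x, y))

/-- The set of invariant Borel probability measures of a map. -/
def invMeas {Z : Type*} [MeasurableSpace Z] (U : Z → Z) : Set (ProbabilityMeasure Z) :=
  {μ | μ.toMeasure.map U = μ.toMeasure}

/-- `ψ_f(ν) = min { ∫ f dλ : λ ∈ M_{T×S}(X × Y), (π_Y)_* λ = ν }`. -/
def psi2 {X Y : Type*} [MeasurableSpace X] [MeasurableSpace Y]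
    (T : X → X) (S : Y → Y) (f : X × Y → ℝ) (ν : ProbabilityMeasure Y) : ℝ :=
  sInf {r | ∃ lam ∈ invMeas (Prod.map T S), lam.toMeasure.map Prod.snd = ν.toMeasure ∧
    r = ∫ p, f p ∂lam.toMeasure}

/-- `α(f) = sup_{ν ∈ M_S(Y)} ψ_f(ν)`. -/
def alpha2 {X Y : Type*} [MeasurableSpace X] [MeasurableSpace Y]
    (T : X → X) (S : Y → Y) (f : X × Y → ℝ) : ℝ :=
  sSup {r | ∃ ν ∈ invMeas S, r = psi2 T S f ν}

/-- `R_f`: points `(x, y)` whose Birkhoff averages converge. -/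
def reg2 {X Y : Type*} (T : X → X) (S : Y → Y) (f : X × Y → ℝ) : Set (X × Y) :=
  {p | ∃ L : ℝ, Tendsto (fun k : ℕ => birk2 T S f k p.1 p.2) atTop (𝓝 L)}

/-- `β(f) = sup_{y ∈ π_Y(R_f)} inf_{(x,y) ∈ R_f} lim_k A_k f(x, y)`. -/
def beta2 {X Y : Type*} (T : X → X) (S : Y → Y) (f : X × Y → ℝ) : ℝ :=
  sSup {r | ∃ y : Y, (∃ x : X, (x, y) ∈ reg2 T S f) ∧
    r = sInf {L | ∃ x : X, (x, y) ∈ reg2 T S f ∧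
      Tendsto (fun k : ℕ => birk2 T S f k x y) atTop (𝓝 L)}}

/-- `γ(f) = sup_{y ∈ Y} inf_{x ∈ X} limsup_k A_k f(x, y)`. -/
def gamma2 {X Y : Type*} (T : X → X) (S : Y → Y) (f : X × Y → ℝ) : ℝ :=
  ⨆ y : Y, ⨅ x : X, limsup (fun k : ℕ => birk2 T S f k x y) atTop

/-- `δ(f) = limsup_k max_{y ∈ Y} min_{x ∈ X} A_k f(x, y)`. -/
def delta2 {X Y : Type*} (T : X → X) (S : Y → Y) (f : X × Y → ℝ) : ℝ :=
  limsup (fun k : ℕ => ⨆ y : Y, ⨅ x : X, birk2 T S f k x y) atTop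

/-!
Take `X = Bool` with the identity, `Y = EReal` (in place of `ℤ ∪ {±∞}`) with the shift
`y ↦ y + 1`, which fixes `±∞`, and `f (x, y) = ±clamp y`, the sign given by `x` and `clamp` the
truncation to `[-1, 1]`. Every orbit of the shift tends to `+∞` except the fixed point `-∞`, so
each Birkhoff average converges to `±1`, and choosing the sign of `x` gives `β = γ = -1`. An
invariant measure of the shift is carried by `{-∞, +∞}` (the unit intervals wander), where `x`
can be chosen measurably to make `f = -1`; as `f ≥ -1`, this gives `α = -1`. But for each `k`
the orbit segment of length `k` centred at `0` has Birkhoff sum `0` because `clamp` is odd, so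
`δ = 0`.
-/

section BirkhoffLimits

variable {X Y : Type*}

theorem birk2_id_mul (S : Y → Y) (c : X → ℝ) (h : Y → ℝ) (k : ℕ) (x : X) (y : Y) :
    birk2 id S (fun p => c p.1 * h p.2) k x y = c x * birkhoffAverage ℝ S h k y := by
  simp only [birk2, birkhoffAverage, birkhoffSum, Prod.map_iterate, Function.iterate_id,
    Prod.map_apply, id, smul_eq_mul, ← Finset.mul_sum]
  ring

variable {T : X → X} {S : Y → Y} {f : X × Y → ℝ} {ℓ : X → Y → ℝ}

theorem gamma2_eq_iSup_iInf_of_tendsto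
    (h : ∀ x y, Tendsto (fun k => birk2 T S f k x y) atTop (𝓝 (ℓ x y))) :
    gamma2 T S f = ⨆ y, ⨅ x, ℓ x y := by
  simp only [gamma2, fun x y => (h x y).limsup_eq]

theorem beta2_eq_iSup_iInf_of_tendsto [Nonempty X]
    (h : ∀ x y, Tendsto (fun k => birk2 T S f k x y) atTop (𝓝 (ℓ x y))) :
    beta2 T S f = ⨆ y, ⨅ x, ℓ x y := by
  have hlimits : ∀ y, {L | ∃ x, (x, y) ∈ reg2 T S f ∧
      Tendsto (fun k => birk2 T S f k x y) atTop (𝓝 L)} = Set.range (ℓ · y) := by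
    refine fun y => Set.ext fun L => ⟨?_, ?_⟩
    · rintro ⟨x, -, hx⟩
      exact ⟨x, tendsto_nhds_unique (h x y) hx⟩
    · rintro ⟨x, rfl⟩
      exact ⟨x, ⟨_, h x y⟩, h x y⟩
  have hsup : {r | ∃ y, (∃ x, (x, y) ∈ reg2 T S f) ∧ r = sInf {L | ∃ x, (x, y) ∈ reg2 T S f ∧
      Tendsto (fun k => birk2 T S f k x y) atTop (𝓝 L)}} = Set.range (fun y => ⨅ x, ℓ x y) := by
    refine Set.ext fun r => ⟨?_, ?_⟩
    · rintro ⟨y, -, rfl⟩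
      exact ⟨y, by rw [hlimits]; rfl⟩
    · rintro ⟨y, rfl⟩
      exact ⟨y, ⟨Classical.arbitrary X, _, h _ y⟩, by rw [hlimits]; rfl⟩
  rw [beta2, hsup]
  rfl

end BirkhoffLimits

theorem Function.Odd.sum_range_sub_half_eq_zero {h : ℝ → ℝ} (hh : Function.Odd h) (k : ℕ) :
    ∑ j ∈ Finset.range k, h (j - (k - 1) / 2) = 0 := by
  have hreflect : ∀ j ∈ Finset.range k,
      h ((k - 1 - j : ℕ) - (k - 1) / 2) = -h (j - (k - 1) / 2) := by
    intro j hj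
    have hjk : j + 1 ≤ k := Finset.mem_range.mp hj
    rw [← hh, Nat.cast_sub (by omega), Nat.cast_sub (by omega)]
    congr 1
    push_cast
    ring
  have := Finset.sum_range_reflect (fun j : ℕ => h (j - (k - 1) / 2)) k
  rw [Finset.sum_congr rfl hreflect, Finset.sum_neg_distrib] at this
  linarith

namespace ClampShift

def boolSign (x : Bool) : ℝ := if x then 1 else -1

theorem iInf_boolSign_mul (t : ℝ) : ⨅ x, boolSign x * t = -|t| := by
  refine le_antisymm ?_ (le_ciInf fun x => by cases x <;> simp [boolSign, le_abs_self, neg_abs_le])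
  rcases le_total 0 t with ht | ht
  · exact (ciInf_le (Finite.bddBelow_range _) false).trans_eq (by simp [boolSign, abs_of_nonneg ht])
  · exact (ciInf_le (Finite.bddBelow_range _) true).trans_eq (by simp [boolSign, abs_of_nonpos ht])

def clamp (y : EReal) : ℝ := (max (-1) (min 1 y)).toReal

theorem clamp_coe (r : ℝ) : clamp r = max (-1) (min 1 r) := by
  rw [clamp, ← EReal.coe_one, ← EReal.coe_neg, ← EReal.coe_strictMono.monotone.map_min,
    ← EReal.coe_strictMono.monotone.map_max, EReal.toReal_coe]

theorem clamp_bot : clamp ⊥ = -1 := by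
  simp [clamp]

theorem clamp_top : clamp ⊤ = 1 := by
  rw [clamp, min_eq_left le_top, ← EReal.coe_one, ← EReal.coe_neg,
    ← EReal.coe_strictMono.monotone.map_max, EReal.toReal_coe]
  norm_num

theorem abs_clamp_le_one (y : EReal) : |clamp y| ≤ 1 := by
  induction y using EReal.rec with
  | bot => simp [clamp_bot]
  | top => simp [clamp_top]
  | coe r => rw [clamp_coe, abs_le]; constructor <;> simp

theorem continuous_clamp : Continuous clamp := by
  refine EReal.continuousOn_toReal.comp_continuous
    (continuous_const.max (continuous_const.min continuous_id)) fun y => ?_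
  simp [← EReal.coe_one]

theorem odd_clamp_coe : Function.Odd (fun r : ℝ => clamp r) := by
  intro r
  simp only [clamp_coe, max_def, min_def]
  split_ifs <;> linarith

def shift : EReal ≃ₜ EReal :=
  (StrictMono.orderIsoOfSurjective (· + 1)
    (fun _ _ h => by simpa using EReal.add_lt_add_right_coe h 1)
    (fun y => ⟨y - 1, by
      induction y using EReal.rec with
      | bot => simp
      | coe r => simp [← EReal.coe_one, ← EReal.coe_sub, ← EReal.coe_add]
      | top => simp [← EReal.coe_one]⟩)).toHomeomorph

theorem shift_apply (y : EReal) : shift y = y + 1 := rfl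

theorem shift_iterate_coe (j : ℕ) (r : ℝ) : shift^[j] r = ((r + j : ℝ) : EReal) := by
  induction j with
  | zero => simp
  | succ n ih =>
    rw [Function.iterate_succ_apply', ih, shift_apply, ← EReal.coe_one, ← EReal.coe_add,
      Nat.cast_succ, add_assoc]

theorem shift_iterate_bot (j : ℕ) : shift^[j] ⊥ = ⊥ :=
  Function.iterate_fixed (by simp [shift_apply]) j

theorem shift_iterate_top (j : ℕ) : shift^[j] ⊤ = ⊤ :=
  Function.iterate_fixed (by simp [shift_apply, ← EReal.coe_one]) j

def limitSign (y : EReal) : ℝ := if y = ⊥ then -1 else 1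

theorem tendsto_birkhoffAverage_shift_clamp (y : EReal) :
    Tendsto (birkhoffAverage ℝ shift clamp · y) atTop (𝓝 (limitSign y)) := by
  refine Tendsto.cesaro_smul (u := fun j => clamp (shift^[j] y)) ?_
  induction y using EReal.rec with
  | bot => simp [limitSign, shift_iterate_bot, clamp_bot]
  | top => simp [limitSign, shift_iterate_top, clamp_top]
  | coe r =>
    refine tendsto_const_nhds.congr' ?_
    filter_upwards [eventually_ge_atTop ⌈1 - r⌉₊] with j hj
    have : 1 - r ≤ j := (Nat.le_ceil _).trans (by exact_mod_cast hj)
    rw [shift_iterate_coe, clamp_coe, min_eq_left (by linarith), max_eq_right (by norm_num)]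
    simp [limitSign]

def signedClamp (p : Bool × EReal) : ℝ := boolSign p.1 * clamp p.2

theorem continuous_signedClamp : Continuous signedClamp :=
  ((continuous_of_discreteTopology (f := boolSign)).comp continuous_fst).mul
    (continuous_clamp.comp continuous_snd)

theorem birk2_signedClamp (k : ℕ) (x : Bool) (y : EReal) :
    birk2 id shift signedClamp k x y = boolSign x * birkhoffAverage ℝ shift clamp k y :=
  birk2_id_mul _ _ _ k x y

theorem tendsto_birk2_signedClamp (x : Bool) (y : EReal) :
    Tendsto (fun k => birk2 id shift signedClamp k x y) atTop (𝓝 (boolSign x * limitSign y)) := by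
  simpa only [birk2_signedClamp] using (tendsto_birkhoffAverage_shift_clamp y).const_mul _

theorem iSup_iInf_boolSign_mul_limitSign : ⨆ y, ⨅ x, boolSign x * limitSign y = -1 := by
  have habs : ∀ y, |limitSign y| = 1 := fun y => by unfold limitSign; split_ifs <;> simp
  simp only [iInf_boolSign_mul, habs, ciSup_const]

theorem gamma2_signedClamp : gamma2 id shift signedClamp = -1 := by
  rw [gamma2_eq_iSup_iInf_of_tendsto tendsto_birk2_signedClamp, iSup_iInf_boolSign_mul_limitSign]

theorem beta2_signedClamp : beta2 id shift signedClamp = -1 := by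
  rw [beta2_eq_iSup_iInf_of_tendsto tendsto_birk2_signedClamp, iSup_iInf_boolSign_mul_limitSign]

theorem birkhoffAverage_shift_clamp_centered (k : ℕ) :
    birkhoffAverage ℝ shift clamp k ((-((k - 1) / 2) : ℝ) : EReal) = 0 := by
  simp only [birkhoffAverage, birkhoffSum, shift_iterate_coe, neg_add_eq_sub]
  rw [odd_clamp_coe.sum_range_sub_half_eq_zero, smul_zero]

theorem iSup_iInf_birk2_signedClamp (k : ℕ) :
    ⨆ y, ⨅ x, birk2 id shift signedClamp k x y = 0 := by
  simp only [birk2_signedClamp, iInf_boolSign_mul]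
  have hbdd : BddAbove (Set.range fun y => -|birkhoffAverage ℝ shift clamp k y|) :=
    ⟨0, by rintro _ ⟨y, rfl⟩; simp⟩
  refine le_antisymm (ciSup_le fun y => by simp) (le_ciSup_of_le hbdd ((-((k - 1) / 2) : ℝ)) ?_)
  rw [birkhoffAverage_shift_clamp_centered, abs_zero, neg_zero]

theorem delta2_signedClamp : delta2 id shift signedClamp = 0 := by
  simp only [delta2, iSup_iInf_birk2_signedClamp, limsup_const]

theorem ae_eq_bot_or_eq_top {ν : Measure EReal} [IsFiniteMeasure ν]
    (hν : MeasurePreserving shift ν ν) : ∀ᵐ y ∂ν, y = ⊥ ∨ y = ⊤ := by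
  -- a conservative map has no wandering set of positive measure
  have hwander (n : ℤ) : ν (Set.Ico ((n : ℝ) : EReal) ((n + 1 : ℝ) : EReal)) = 0 := by
    by_contra hpos
    obtain ⟨y, hy, m, hm, hmy⟩ :=
      hν.conservative.exists_mem_iterate_mem measurableSet_Ico.nullMeasurableSet hpos
    induction y using EReal.rec with
    | bot => exact absurd hy.1 (not_le.2 (EReal.bot_lt_coe _))
    | top => exact absurd hy.2 (not_lt.2 le_top)
    | coe r =>
      rw [shift_iterate_coe] at hmy
      simp only [Set.mem_Ico, EReal.coe_le_coe_iff, EReal.coe_lt_coe_iff] at hy hmy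
      have : (1 : ℝ) ≤ m := by exact_mod_cast Nat.one_le_iff_ne_zero.2 hm
      linarith
  refine measure_mono_null (fun y hy => ?_) (measure_iUnion_null hwander)
  induction y using EReal.rec with
  | bot => exact absurd (Or.inl rfl) hy
  | top => exact absurd (Or.inr rfl) hy
  | coe r =>
    simp only [Set.mem_iUnion, Set.mem_Ico, EReal.coe_le_coe_iff, EReal.coe_lt_coe_iff]
    exact ⟨⌊r⌋, Int.floor_le r, Int.lt_floor_add_one r⟩

theorem measurable_decide_eq_bot : Measurable fun y : EReal => decide (y = ⊥) :=
  measurable_to_countable' fun b => by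
    cases b
    · exact (measurableSet_singleton ⊥).compl.congr (by ext; simp)
    · exact (measurableSet_singleton ⊥).congr (by ext; simp)

def coupling (ν : ProbabilityMeasure EReal) : ProbabilityMeasure (Bool × EReal) :=
  ν.map (measurable_decide_eq_bot.prodMk measurable_id).aemeasurable

theorem map_snd_coupling (ν : ProbabilityMeasure EReal) :
    (coupling ν).toMeasure.map Prod.snd = ν := by
  rw [coupling, ProbabilityMeasure.toMeasure_map,
    Measure.map_map measurable_snd (measurable_decide_eq_bot.prodMk measurable_id)]
  exact Measure.map_id

theorem coupling_mem_invMeas {ν : ProbabilityMeasure EReal} (hν : ν ∈ invMeas shift) :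
    coupling ν ∈ invMeas (Prod.map id shift) := by
  have hae := ae_eq_bot_or_eq_top ⟨shift.continuous.measurable, hν⟩
  show ((coupling ν).toMeasure).map _ = _
  rw [coupling, ProbabilityMeasure.toMeasure_map,
    Measure.map_map (measurable_id.prodMap shift.continuous.measurable)
      (measurable_decide_eq_bot.prodMk measurable_id)]
  refine Measure.map_congr (hae.mono fun y hy => ?_)
  rcases hy with rfl | rfl <;> simp [shift_apply, ← EReal.coe_one]

theorem integral_signedClamp_coupling {ν : ProbabilityMeasure EReal} (hν : ν ∈ invMeas shift) :
    ∫ p, signedClamp p ∂(coupling ν) = -1 := by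
  have hae := ae_eq_bot_or_eq_top ⟨shift.continuous.measurable, hν⟩
  rw [coupling, ProbabilityMeasure.toMeasure_map, integral_map
    (measurable_decide_eq_bot.prodMk measurable_id).aemeasurable
    continuous_signedClamp.aestronglyMeasurable]
  rw [integral_congr_ae (g := fun _ => (-1 : ℝ)) (hae.mono fun y hy => ?_)]
  · simp
  · rcases hy with rfl | rfl <;> simp [signedClamp, boolSign, clamp_bot, clamp_top]

theorem neg_one_le_integral_signedClamp (μ : ProbabilityMeasure (Bool × EReal)) :
    -1 ≤ ∫ p, signedClamp p ∂μ := by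
  have hint : Integrable signedClamp μ :=
    continuous_signedClamp.integrable_of_hasCompactSupport (.of_compactSpace _)
  have hle : ∀ p, -1 ≤ signedClamp p := by
    rintro ⟨x, y⟩
    have := abs_le.1 (abs_clamp_le_one y)
    cases x <;> simp [signedClamp, boolSign] <;> linarith
  calc (-1 : ℝ) = ∫ _, (-1 : ℝ) ∂(μ : Measure (Bool × EReal)) := by simp
    _ ≤ ∫ p, signedClamp p ∂μ := integral_mono (integrable_const _) hint hle

theorem psi2_signedClamp {ν : ProbabilityMeasure EReal} (hν : ν ∈ invMeas shift) :
    psi2 id shift signedClamp ν = -1 :=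
  IsLeast.csInf_eq ⟨⟨coupling ν, coupling_mem_invMeas hν, map_snd_coupling ν,
    (integral_signedClamp_coupling hν).symm⟩,
    by rintro _ ⟨μ, -, -, rfl⟩; exact neg_one_le_integral_signedClamp μ⟩

theorem alpha2_signedClamp : alpha2 id shift signedClamp = -1 := by
  have hdirac : (⟨.dirac ⊤, inferInstance⟩ : ProbabilityMeasure EReal) ∈ invMeas shift := by
    show (Measure.dirac ⊤).map shift = Measure.dirac ⊤
    rw [Measure.map_dirac' shift.continuous.measurable, shift_apply, ← EReal.coe_one,
      EReal.top_add_coe]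
  have hvalues : {r | ∃ ν ∈ invMeas shift, r = psi2 id shift signedClamp ν} = {-1} :=
    Set.eq_singleton_iff_unique_mem.2 ⟨⟨_, hdirac, (psi2_signedClamp hdirac).symm⟩,
      by rintro _ ⟨ν, hν, rfl⟩; exact psi2_signedClamp hν⟩
  rw [alpha2, hvalues, csSup_singleton]

end ClampShift

/-- there exist topological dynamical systems `(X, T)`, `(Y, S)` and a
continuous `f ∈ C(X × Y)` (with `π : X × Y → Y` the second-coordinate projection,
a factor map from `(X × Y, T × S)` to `(Y, S)`) such that
`α(f) = β(f) = γ(f) = −1` while `δ(f) = 0`; in particular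
`α(f) = β(f) = γ(f) < δ(f)`. -/
theorem stmt5 :
    ∃ (𝒳 𝒴 : TDS) (f : 𝒳.carrier × 𝒴.carrier → ℝ),
      Nonempty 𝒳.carrier ∧ Nonempty 𝒴.carrier ∧ Continuous f ∧
      alpha2 (⇑𝒳.homeo) (⇑𝒴.homeo) f = -1 ∧
      beta2 (⇑𝒳.homeo) (⇑𝒴.homeo) f = -1 ∧
      gamma2 (⇑𝒳.homeo) (⇑𝒴.homeo) f = -1 ∧
      delta2 (⇑𝒳.homeo) (⇑𝒴.homeo) f = 0 :=
  ⟨⟨Bool, .refl Bool⟩, ⟨EReal, ClampShift.shift⟩, ClampShift.signedClamp, ⟨true⟩, ⟨⊥⟩,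
    ClampShift.continuous_signedClamp, ClampShift.alpha2_signedClamp,
    ClampShift.beta2_signedClamp, ClampShift.gamma2_signedClamp, ClampShift.delta2_signedClamp⟩
end
end

section
/- If a topological dynamical system (X, T) has the periodic specification property, then the set M_T^co(X) of T-invariant Borel probability measures supported on a single periodic orbit is dense in M_T(X) with respect to the weak* topology. -/
open MeasureTheory Filter Topology
open scoped ENNReal NNReal

noncomputable section

/-- The invariant probability measures supported on a single closed (periodic) orbit:
`M_T^co(X) = { (1/k) Σ_{j<k} δ_{T^j x} : k ∈ ℕ, T^k x = x }`. -/
def Mco {Z : Type*} [MeasurableSpace Z] (U : Z → Z) : Set (ProbabilityMeasure Z) :=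
  {μ | ∃ (k : ℕ) (z : Z), 0 < k ∧ U^[k] z = z ∧
    μ.toMeasure = (k : ℝ≥0∞)⁻¹ • ∑ j ∈ Finset.range k, Measure.dirac (U^[j] z)}

/-- The `j`-th power (`j : ℤ`) of a homeomorphism, applied to a point. -/
def zit {X : Type*} [TopologicalSpace X] (T : X ≃ₜ X) (j : ℤ) (x : X) : X :=
  (T.toEquiv ^ j) x

/-- The periodic specification property for `(X, T)` (with respect to the metric of
`X`): for every `η > 0` there is `D = D(η) ∈ ℕ` such that every `D`-spaced
specification `ξ = (x_i, [a_i, b_i])_{i=1}^n` admits an `η`-tracing point of period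
`b_n - a_1 + D`. -/
def PerSpecProp {X : Type*} [MetricSpace X] (T : X ≃ₜ X) : Prop :=
  ∀ η : ℝ, 0 < η → ∃ D : ℕ, 0 < D ∧
    ∀ (n : ℕ) (x : Fin (n + 1) → X) (a b : Fin (n + 1) → ℤ),
      (∀ i, a i ≤ b i) →
      (∀ i : Fin n, (D : ℤ) ≤ a i.succ - b i.castSucc) →
      ∃ x' : X, (∀ i : Fin (n + 1), ∀ j : ℤ, a i ≤ j → j ≤ b i →
          dist (zit T j x') (zit T j (x i)) < η) ∧
        zit T (b (Fin.last n) - a 0 + (D : ℤ)) x' = x'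

/-!
Let `μ` be invariant and `g` continuous with values in a normed space (so that finitely many test
functions are handled at once). The Birkhoff average `Φ = A_L g` of length `L = N + D` has the
same `μ`-integral as `g`, so `∫ g dμ` lies in the closed convex hull of the values of `Φ` and is
therefore approximated by an equal-weight average `(1/M) ∑ Φ(y_i)`, rational weights being dense.
Periodic specification with gap `D` gives a point of period `M L` whose orbit follows that of
`y_i` for `N` steps on the `i`-th block of length `L`. Its orbit average, the integral of `g`
against a periodic orbit measure, differs from `(1/M) ∑ Φ(y_i)` by the tracing error plus
`O(D / L)`.
-/

open Finset
open scoped BoundedContinuousFunction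

section UniformAverages

variable {α E : Type*} [AddCommGroup E] [Module ℝ E]

def uniformAverages (g : α → E) : Set E :=
  {v | ∃ l : Multiset α, l ≠ 0 ∧ (Multiset.card l : ℝ)⁻¹ • (l.map g).sum = v}

lemma smul_add_one_sub_smul_mem_uniformAverages {g : α → E} {v w : E}
    (hv : v ∈ uniformAverages g) (hw : w ∈ uniformAverages g) {p n : ℕ} (hpn : p ≤ n)
    (hn : 0 < n) :
    ((p : ℝ) / n) • v + (1 - (p : ℝ) / n) • w ∈ uniformAverages g := by
  obtain ⟨l, hl, rfl⟩ := hv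
  obtain ⟨l', hl', rfl⟩ := hw
  obtain ⟨k, rfl⟩ := Nat.exists_eq_add_of_le hpn
  set c := Multiset.card l
  set c' := Multiset.card l'
  have hc : 0 < c := Multiset.card_pos.2 hl
  have hc' : 0 < c' := Multiset.card_pos.2 hl'
  have hcard : Multiset.card ((p * c') • l + (k * c) • l') = (p + k) * c * c' := by
    simp only [Multiset.card_add, Multiset.card_nsmul]
    ring
  refine ⟨(p * c') • l + (k * c) • l', Multiset.card_pos.1 (hcard ▸ by positivity), ?_⟩
  simp only [hcard, Multiset.map_add, Multiset.map_nsmul, Multiset.sum_add, Multiset.sum_nsmul,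
    ← Nat.cast_smul_eq_nsmul ℝ, smul_add, smul_smul]
  congr 2 <;> field_simp <;> push_cast <;> ring

variable [TopologicalSpace E] [IsTopologicalAddGroup E] [ContinuousSMul ℝ E]

lemma convex_closure_uniformAverages (g : α → E) : Convex ℝ (closure (uniformAverages g)) := by
  intro v hv w hw a b ha hb hab
  obtain rfl : b = 1 - a := by linarith
  have ha1 : a ≤ 1 := by linarith
  have hlim : Tendsto (fun n : ℕ => (⌊a * n⌋₊ : ℝ) / n) atTop (𝓝 a) :=
    (tendsto_nat_floor_mul_div_atTop ha).comp tendsto_natCast_atTop_atTop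
  refine isClosed_closure.mem_of_tendsto
    ((hlim.smul_const v).add ((tendsto_const_nhds.sub hlim).smul_const w)) ?_
  filter_upwards [eventually_gt_atTop 0] with n hn
  have hpn : ⌊a * n⌋₊ ≤ n := Nat.floor_le_of_le (by nlinarith)
  exact map_mem_closure₂
    (f := fun v w => ((⌊a * n⌋₊ : ℝ) / n) • v + (1 - (⌊a * n⌋₊ : ℝ) / n) • w) (by fun_prop)
    hv hw fun v hv w hw => smul_add_one_sub_smul_mem_uniformAverages hv hw hpn hn

lemma closure_convexHull_range_subset_closure_uniformAverages (g : α → E) :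
    closure (convexHull ℝ (Set.range g)) ⊆ closure (uniformAverages g) :=
  closure_minimal
    (convexHull_min (Set.range_subset_iff.2 fun x => subset_closure ⟨{x}, by simp, by simp⟩)
      (convex_closure_uniformAverages g))
    isClosed_closure

end UniformAverages

section BirkhoffSum

variable {α M E : Type*} [AddCommMonoid M] [NormedAddCommGroup E]

lemma birkhoffSum_mul (f : α → α) (g : α → M) (m n : ℕ) (x : α) :
    birkhoffSum f g (m * n) x = ∑ i ∈ range m, birkhoffSum f g n (f^[i * n] x) := by
  induction m with
  | zero => simp
  | succ m ih => rw [add_mul, one_mul, birkhoffSum_add, ih, sum_range_succ]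

lemma dist_birkhoffSum_add_le {f : α → α} {g : α → E} {x y : α} {N D : ℕ} {δ C : ℝ}
    (hδ : ∀ k < N, dist (g (f^[k] x)) (g (f^[k] y)) ≤ δ) (hC : ∀ u v, dist (g u) (g v) ≤ C) :
    dist (birkhoffSum f g (N + D) x) (birkhoffSum f g (N + D) y) ≤ N * δ + D * C := by
  refine (dist_birkhoffSum_birkhoffSum_le f g _ x y).trans ?_
  rw [sum_range_add]
  gcongr
  · simpa using sum_le_card_nsmul _ _ _ fun k hk => hδ k (mem_range.1 hk)
  · simpa using sum_le_card_nsmul (range D) (fun k => dist (g (f^[N + k] x)) (g (f^[N + k] y))) C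
      fun k _ => hC _ _

lemma dist_birkhoffAverage_mul_le {f : α → α} {g : α → E} [NormedSpace ℝ E] {M L : ℕ}
    (hM : M ≠ 0) (x : α) (y : Fin M → α) {δ : ℝ}
    (h : ∀ i : Fin M, dist (birkhoffSum f g L (f^[i * L] x)) (birkhoffSum f g L (y i)) ≤ δ) :
    dist (birkhoffAverage ℝ f g (M * L) x) ((M : ℝ)⁻¹ • ∑ i, birkhoffAverage ℝ f g L (y i)) ≤
      δ / L := by
  simp only [birkhoffAverage, ← smul_sum, smul_smul, birkhoffSum_mul,
    ← Fin.sum_univ_eq_sum_range (fun i => birkhoffSum f g L (f^[i * L] x)), Nat.cast_mul, mul_inv]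
  rw [dist_smul₀]
  calc ‖(M : ℝ)⁻¹ * (L : ℝ)⁻¹‖ * dist (∑ i : Fin M, birkhoffSum f g L (f^[i * L] x))
        (∑ i, birkhoffSum f g L (y i))
      ≤ ((M : ℝ)⁻¹ * (L : ℝ)⁻¹) * (M * δ) := by
        rw [Real.norm_of_nonneg (by positivity)]
        gcongr
        simpa using (dist_sum_sum_le _ _ _).trans (sum_le_card_nsmul univ _ δ fun i _ => h i)
    _ = δ / L := by field_simp

end BirkhoffSum

lemma MeasureTheory.MeasurePreserving.integral_birkhoffAverage {α E : Type*} [MeasurableSpace α]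
    [NormedAddCommGroup E] [NormedSpace ℝ E] {μ : Measure α} {f : α → α}
    (hf : MeasurePreserving f μ μ) {g : α → E} (hg : Integrable g μ) {n : ℕ} (hn : n ≠ 0) :
    ∫ x, birkhoffAverage ℝ f g n x ∂μ = ∫ x, g x ∂μ := by
  have hcomp : ∀ k, ∫ x, g (f^[k] x) ∂μ = ∫ x, g x ∂μ := fun k => by
    have hk := hf.iterate k
    conv_rhs => rw [← hk.map_eq]
    exact (integral_map hk.measurable.aemeasurable
      (hk.map_eq.symm ▸ hg.aestronglyMeasurable)).symm
  simp only [birkhoffAverage, birkhoffSum]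
  rw [integral_smul, integral_finsetSum (f := fun k x => g (f^[k] x)) _ fun k _ =>
    (hf.iterate k).integrable_comp_of_integrable hg]
  simp only [hcomp, sum_const, card_range, ← Nat.cast_smul_eq_nsmul ℝ, smul_smul]
  rw [inv_mul_cancel₀ (Nat.cast_ne_zero.2 hn), one_smul]

section Homeomorph

variable {X : Type*} [TopologicalSpace X] (T : X ≃ₜ X)

lemma zit_natCast (n : ℕ) (x : X) : zit T n x = T^[n] x := by
  rw [zit, zpow_natCast, ← Equiv.Perm.iterate_eq_pow]
  rfl

lemma zit_add (p q : ℤ) (x : X) : zit T (p + q) x = zit T p (zit T q x) := by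
  rw [zit, zit, zit, zpow_add]
  rfl

end Homeomorph

lemma PerSpecProp.exists_periodic_tracing {X : Type*} [MetricSpace X] {T : X ≃ₜ X}
    (hspec : PerSpecProp T) {η : ℝ} (hη : 0 < η) :
    ∃ D : ℕ, ∀ (N M : ℕ) (y : Fin M → X), M ≠ 0 → ∃ x, T^[M * (N + D)] x = x ∧
      ∀ (i : Fin M) (t : ℕ), t ≤ N → dist (T^[t] (T^[i * (N + D)] x)) (T^[t] (y i)) < η := by
  obtain ⟨D, -, hD⟩ := hspec η hη
  refine ⟨D, fun N M y hM => ?_⟩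
  obtain ⟨m, rfl⟩ := Nat.exists_eq_succ_of_ne_zero hM
  -- Block `i` is `[i (N + D), i (N + D) + N]`, so consecutive blocks are `D` apart and the period
  -- `b_last - a_0 + D` is `M (N + D)`; specifying `T^{-i (N + D)} (y i)` on block `i` makes the
  -- orbit of `x` follow that of `y i` there.
  let a : Fin (m + 1) → ℤ := fun i => (i * (N + D) : ℕ)
  obtain ⟨x, htrace, hper⟩ := hD m (fun i => zit T (-a i) (y i)) a (fun i => a i + N)
    (fun i => by omega) (fun i => by push_cast [a, Fin.val_succ, Fin.val_castSucc]; linarith)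
  refine ⟨x, ?_, fun i t ht => ?_⟩
  · rw [← zit_natCast, ← hper]
    congr 1
    push_cast [a, Fin.val_last, Fin.val_zero]
    ring
  · have h := htrace i (a i + t) (by omega) (by omega)
    have hx : zit T (a i + t) x = T^[t] (T^[i * (N + D)] x) := by
      rw [← Function.iterate_add_apply, ← zit_natCast]
      push_cast [a]
      ring_nf
    have hy : zit T (a i + t) (zit T (-a i) (y i)) = T^[t] (y i) := by
      rw [← zit_add, add_neg_cancel_comm, zit_natCast]
    rwa [hx, hy] at h

lemma exists_mem_Mco_integral_eq_birkhoffAverage {Z : Type*} [MeasurableSpace Z]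
    [MeasurableSingletonClass Z] (U : Z → Z) {P : ℕ} (hP : 0 < P) {z : Z} (hz : U^[P] z = z) :
    ∃ ν ∈ Mco U, ∀ f : Z → ℝ, ∫ x, f x ∂(ν : Measure Z) = birkhoffAverage ℝ U f P z := by
  let ν : Measure Z := (P : ℝ≥0∞)⁻¹ • ∑ j ∈ range P, Measure.dirac (U^[j] z)
  have hν : IsProbabilityMeasure ν := ⟨by
    simp [ν, ENNReal.inv_mul_cancel (Nat.cast_ne_zero.2 hP.ne') (ENNReal.natCast_ne_top P)]⟩
  refine ⟨⟨ν, hν⟩, ⟨P, z, hP, hz, rfl⟩, fun f => ?_⟩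
  rw [ProbabilityMeasure.coe_mk, integral_smul_measure,
    integral_finsetSum_measure fun j _ => integrable_dirac enorm_lt_top]
  simp [birkhoffAverage, birkhoffSum, integral_dirac]

lemma ProbabilityMeasure.mem_closure_of_forall_dist_integral_lt {Ω : Type*} [TopologicalSpace Ω]
    [MeasurableSpace Ω] [OpensMeasurableSpace Ω] {μ : ProbabilityMeasure Ω}
    {S : Set (ProbabilityMeasure Ω)}
    (h : ∀ (F : Finset (Ω →ᵇ ℝ)) (ε : ℝ), 0 < ε → ∃ ν ∈ S, ∀ f ∈ F,
      dist (∫ ω, f ω ∂(ν : Measure Ω)) (∫ ω, f ω ∂(μ : Measure Ω)) < ε) :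
    μ ∈ closure S := by
  classical
  choose ν hνS hν using fun p : Finset (Ω →ᵇ ℝ) × ℕ =>
    h p.1 (1 / (p.2 + 1)) Nat.one_div_pos_of_nat
  refine mem_closure_of_tendsto (f := ν) (b := atTop) ?_ (Eventually.of_forall hνS)
  refine ProbabilityMeasure.tendsto_iff_forall_integral_tendsto.2 fun f => ?_
  refine Metric.tendsto_atTop.2 fun ε hε => ?_
  obtain ⟨n, hn⟩ := exists_nat_one_div_lt hε
  refine ⟨({f}, n), fun p hp => (hν p f (hp.1 (mem_singleton_self f))).trans_le (hn.le.trans' ?_)⟩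
  gcongr
  exact hp.2

lemma MeasureTheory.MeasurePreserving.integral_mem_closure_uniformAverages {X E : Type*}
    [TopologicalSpace X] [CompactSpace X] [MeasurableSpace X] [OpensMeasurableSpace X]
    [NormedAddCommGroup E] [NormedSpace ℝ E] [CompleteSpace E] {μ : Measure X}
    [IsProbabilityMeasure μ] {f : X → X} (hf : Continuous f) (hμ : MeasurePreserving f μ μ)
    {g : X → E} (hg : Continuous g) {L : ℕ} (hL : L ≠ 0) :
    ∫ y, g y ∂μ ∈ closure (uniformAverages (birkhoffAverage ℝ f g L)) := by
  have hΦ : Continuous (birkhoffAverage ℝ f g L) :=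
    continuous_const.smul (continuous_finsetSum _ fun k _ => hg.comp (hf.iterate k))
  rw [← hμ.integral_birkhoffAverage (hg.integrable_of_hasCompactSupport (.of_compactSpace g)) hL]
  exact closure_convexHull_range_subset_closure_uniformAverages _ <|
    (convex_convexHull ℝ _).closure.integral_mem isClosed_closure
      (.of_forall fun x => subset_closure (subset_convexHull ℝ _ (Set.mem_range_self x)))
      (hΦ.integrable_of_hasCompactSupport (.of_compactSpace _))

theorem PerSpecProp.exists_periodic_dist_birkhoffAverage_integral_lt {X E : Type*} [MetricSpace X]
    [CompactSpace X] [MeasurableSpace X] [BorelSpace X] [NormedAddCommGroup E]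
    [NormedSpace ℝ E] [CompleteSpace E] {T : X ≃ₜ X} (hspec : PerSpecProp T) {μ : Measure X}
    [IsProbabilityMeasure μ] (hμ : MeasurePreserving T μ μ) {g : X → E} (hg : Continuous g)
    {ε : ℝ} (hε : 0 < ε) :
    ∃ P x, 0 < P ∧ T^[P] x = x ∧ dist (birkhoffAverage ℝ T g P x) (∫ y, g y ∂μ) < ε := by
  obtain ⟨C, hC⟩ := Metric.isBounded_iff.1 (isCompact_range hg).isBounded
  obtain ⟨η, hη, hgη⟩ := Metric.uniformContinuous_iff.1
    (CompactSpace.uniformContinuous_of_continuous hg) (ε / 3) (by positivity)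
  obtain ⟨D, hD⟩ := hspec.exists_periodic_tracing hη
  obtain ⟨N, hN⟩ := exists_nat_gt (max 0 (3 * D * C / ε))
  obtain ⟨hN0, hNC⟩ := max_lt_iff.1 hN
  have hL : N + D ≠ 0 := by
    have : 0 < N := by exact_mod_cast hN0
    omega
  -- per block: `N` traced steps costing `ε / 3` each, `D` untraced ones costing at most `C` each
  have hsmall : (N * (ε / 3) + D * C) / ((N + D : ℕ) : ℝ) < 2 * ε / 3 := by
    rw [div_lt_iff₀ (Nat.cast_pos.2 (Nat.pos_of_ne_zero hL))]
    rw [div_lt_iff₀ hε] at hNC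
    push_cast
    nlinarith
  obtain ⟨v, ⟨l, hl, hlv⟩, hv⟩ := Metric.mem_closure_iff.1
    (hμ.integral_mem_closure_uniformAverages T.continuous hg hL) (ε / 3) (by positivity)
  obtain ⟨ys, rfl⟩ : ∃ ys : List X, (ys : Multiset X) = l := ⟨l.toList, l.coe_toList⟩
  have hM : ys.length ≠ 0 := by simpa using hl
  simp only [Multiset.map_coe, Multiset.sum_coe, Multiset.coe_card,
    ← Fin.sum_univ_fun_getElem] at hlv
  obtain ⟨x, hper, htrace⟩ := hD N ys.length (fun i => ys[i.1]) hM
  have hblock := dist_birkhoffAverage_mul_le hM x (fun i => ys[i.1]) fun i =>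
    dist_birkhoffSum_add_le (D := D) (fun k hk => (hgη (htrace i k hk.le)).le)
      fun u v => hC (Set.mem_range_self u) (Set.mem_range_self v)
  rw [hlv] at hblock
  refine ⟨ys.length * (N + D), x, Nat.pos_of_ne_zero (mul_ne_zero hM hL), hper, ?_⟩
  calc _ ≤ dist (birkhoffAverage ℝ T g (ys.length * (N + D)) x) v + dist (∫ y, g y ∂μ) v :=
        dist_triangle_right _ _ _
    _ < 2 * ε / 3 + ε / 3 := add_lt_add_of_lt_of_le (hblock.trans_lt hsmall) hv.le
    _ = ε := by ring

/-- if `(X, T)` has the periodic specification property, then the set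
`M_T^co(X)` of invariant measures supported on a single periodic orbit is dense in
`M_T(X)` for the weak* topology. -/
theorem stmt6
    {X : Type*} [MetricSpace X] [CompactSpace X] [MeasurableSpace X] [BorelSpace X]
    (T : X ≃ₜ X) (hspec : PerSpecProp T) :
    invMeas (⇑T) ⊆ closure (Mco ⇑T) := by
  intro μ hμ
  refine ProbabilityMeasure.mem_closure_of_forall_dist_integral_lt fun F ε hε => ?_
  let g : X → (F → ℝ) := fun x f => (f : X →ᵇ ℝ) x
  obtain ⟨P, x, hP, hx, hclose⟩ := hspec.exists_periodic_dist_birkhoffAverage_integral_lt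
    ⟨T.measurable, hμ⟩ (continuous_pi fun f => f.1.continuous : Continuous g) hε
  obtain ⟨ν, hν, hνint⟩ := exists_mem_Mco_integral_eq_birkhoffAverage T hP hx
  refine ⟨ν, hν, fun f hf => ?_⟩
  have hgint : ∀ f : F, Integrable (g · f) (μ : Measure X) := fun f => f.1.integrable _
  calc dist (∫ y, f y ∂(ν : Measure X)) (∫ y, f y ∂(μ : Measure X))
      = dist (birkhoffAverage ℝ T g P x ⟨f, hf⟩) ((∫ y, g y ∂(μ : Measure X)) ⟨f, hf⟩) := by
        rw [hνint, eval_integral hgint]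
        simp [birkhoffAverage, birkhoffSum, g]
    _ ≤ dist (birkhoffAverage ℝ T g P x) (∫ y, g y ∂(μ : Measure X)) := dist_le_pi_dist _ _ _
    _ < ε := hclose
end
end

section
/- Let (X, T) and (Y, S) be topological dynamical systems and f ∈ C(X × Y). If the periodic points of (X, T) are dense in X and the periodic points of (Y, S) are dense in Y, then δ(f) = δ_per(f). -/
open MeasureTheory Filter Topology
open scoped ENNReal NNReal

noncomputable section

/-- `α_per(f)`: as `α(f)`, but with both measures ranging over closed-orbit measures. -/
def alphaPer2 {X Y : Type*} [MeasurableSpace X] [MeasurableSpace Y]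
    (T : X → X) (S : Y → Y) (f : X × Y → ℝ) : ℝ :=
  sSup {r | ∃ ν ∈ Mco S,
    r = sInf {t | ∃ lam ∈ Mco (Prod.map T S), lam.toMeasure.map Prod.snd = ν.toMeasure ∧
      t = ∫ p, f p ∂lam.toMeasure}}

/-- The set of periodic points. -/
def perPts {Z : Type*} (U : Z → Z) : Set Z :=
  {z | ∃ t : ℕ, 0 < t ∧ U^[t] z = z}

/-- `δ_per(f) = limsup_k sup_{y ∈ Per_S(Y)} inf_{x ∈ Per_T(X)} A_k f(x, y)`. -/
def deltaPer2 {X Y : Type*} (T : X → X) (S : Y → Y) (f : X × Y → ℝ) : ℝ :=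
  limsup (fun k : ℕ => sSup {r | ∃ y ∈ perPts S,
    r = sInf {t | ∃ x ∈ perPts T, t = birk2 T S f k x y}}) atTop

/-- The specification property for `(X, T)` (with respect to the metric of `X`):
for every `η > 0` there is `D = D(η)` such that every `D`-spaced specification
`ξ = (x_i, [a_i, b_i])_{i=1}^n` admits an `η`-tracing point. -/
def SpecProp {X : Type*} [MetricSpace X] (T : X ≃ₜ X) : Prop :=
  ∀ η : ℝ, 0 < η → ∃ D : ℕ, 0 < D ∧
    ∀ (n : ℕ) (x : Fin (n + 1) → X) (a b : Fin (n + 1) → ℤ),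
      (∀ i, a i ≤ b i) →
      (∀ i : Fin n, (D : ℤ) ≤ a i.succ - b i.castSucc) →
      ∃ x' : X, ∀ i : Fin (n + 1), ∀ j : ℤ, a i ≤ j → j ≤ b i →
        dist (zit T j x') (zit T j (x i)) < η

/-- if the periodic points of `(X, T)` are dense in `X` and the periodic
points of `(Y, S)` are dense in `Y`, then `δ(f) = δ_per(f)`. -/
theorem stmt9
    {X Y : Type*}
    [MetricSpace X] [CompactSpace X] [Nonempty X]
    [MetricSpace Y] [CompactSpace Y] [Nonempty Y]
    (T : X ≃ₜ X) (S : Y ≃ₜ Y) (f : X × Y → ℝ) (hf : Continuous f)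
    (hdX : Dense (perPts ⇑T)) (hdY : Dense (perPts ⇑S)) :
    delta2 (⇑T) (⇑S) f = deltaPer2 (⇑T) (⇑S) f := by
  classical
  -- a uniform bound on |f|
  obtain ⟨p₀, -, hp₀⟩ := isCompact_univ.exists_isMaxOn (Set.univ_nonempty)
    ((continuous_abs.comp hf).continuousOn (s := Set.univ))
  set C : ℝ := |f p₀| with hCdef
  have hC : ∀ p : X × Y, |f p| ≤ C := fun p => hp₀ (Set.mem_univ p)
  have hC0 : 0 ≤ C := le_trans (abs_nonneg _) (hC (Classical.arbitrary _))
  -- uniform bound on Birkhoff averages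
  have hbd : ∀ (k : ℕ) (x : X) (y : Y), |birk2 (⇑T) (⇑S) f k x y| ≤ C := by
    intro k x y
    rcases Nat.eq_zero_or_pos k with hk | hk
    · simp [birk2, hk, hC0]
    · have hkR : (0 : ℝ) < (k : ℝ) := by exact_mod_cast hk
      rw [birk2, abs_mul, abs_inv, abs_of_pos hkR]
      have hsum : |∑ j ∈ Finset.range k, f ((Prod.map (⇑T) (⇑S))^[j] (x, y))|
          ≤ (k : ℝ) * C := by
        calc |∑ j ∈ Finset.range k, f ((Prod.map (⇑T) (⇑S))^[j] (x, y))|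
            ≤ ∑ j ∈ Finset.range k, |f ((Prod.map (⇑T) (⇑S))^[j] (x, y))| :=
              Finset.abs_sum_le_sum_abs _ _
          _ ≤ ∑ j ∈ Finset.range k, C := Finset.sum_le_sum fun j _ => hC _
          _ = (k : ℝ) * C := by simp [mul_comm]
      calc (k : ℝ)⁻¹ * |∑ j ∈ Finset.range k, f ((Prod.map (⇑T) (⇑S))^[j] (x, y))|
          ≤ (k : ℝ)⁻¹ * ((k : ℝ) * C) := by
            exact mul_le_mul_of_nonneg_left hsum (by positivity)
        _ = C := by field_simp
  -- continuity of the Birkhoff average as a function of (x, y)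
  have hFc : ∀ k : ℕ, Continuous fun p : X × Y => birk2 (⇑T) (⇑S) f k p.1 p.2 := by
    intro k
    unfold birk2
    exact continuous_const.mul (continuous_finset_sum _ fun j _ =>
      hf.comp ((T.continuous.prodMap S.continuous).iterate j))
  have hFu : ∀ k : ℕ, UniformContinuous fun p : X × Y => birk2 (⇑T) (⇑S) f k p.1 p.2 :=
    fun k => CompactSpace.uniformContinuous_of_continuous (hFc k)
  have hXper : (perPts (⇑T)).Nonempty := hdX.nonempty
  have hYper : (perPts (⇑S)).Nonempty := hdY.nonempty
  -- bddness facts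
  have hbbR : ∀ (k : ℕ) (y : Y), BddBelow (Set.range fun x => birk2 (⇑T) (⇑S) f k x y) := by
    rintro k y
    exact ⟨-C, by rintro r ⟨x, rfl⟩; exact neg_le_of_abs_le (hbd k x y)⟩
  set h : ℕ → Y → ℝ := fun k y => ⨅ x : X, birk2 (⇑T) (⇑S) f k x y with hhdef
  have hh_lb : ∀ k y, -C ≤ h k y := fun k y =>
    le_ciInf fun x => neg_le_of_abs_le (hbd k x y)
  have hh_ub : ∀ k y, h k y ≤ C := fun k y =>
    (ciInf_le (hbbR k y) (Classical.arbitrary X)).trans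
      (le_of_abs_le (hbd k _ y))
  -- Claim A: the inf over periodic x equals the inf over all x
  have hA : ∀ (k : ℕ) (y : Y),
      sInf {t | ∃ x ∈ perPts (⇑T), t = birk2 (⇑T) (⇑S) f k x y} = h k y := by
    intro k y
    have hbbP : BddBelow {t | ∃ x ∈ perPts (⇑T), t = birk2 (⇑T) (⇑S) f k x y} := by
      refine ⟨-C, ?_⟩
      rintro t ⟨x, -, rfl⟩
      exact neg_le_of_abs_le (hbd k x y)
    apply le_antisymm
    · apply le_of_forall_pos_le_add
      intro ε hε
      have hlt : (⨅ x : X, birk2 (⇑T) (⇑S) f k x y) < h k y + ε := by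
        have := hh_lb k y; simp only [hhdef]; linarith [hh_ub k y]
      obtain ⟨x, hx⟩ := exists_lt_of_ciInf_lt hlt
      have hopen : IsOpen {x' : X | birk2 (⇑T) (⇑S) f k x' y < h k y + ε} :=
        isOpen_lt ((hFc k).comp (continuous_id.prodMk continuous_const)) continuous_const
      obtain ⟨x', hx'per, hx'mem⟩ := hdX.exists_mem_open hopen ⟨x, hx⟩
      have : sInf {t | ∃ x ∈ perPts (⇑T), t = birk2 (⇑T) (⇑S) f k x y}
          ≤ birk2 (⇑T) (⇑S) f k x' y := csInf_le hbbP ⟨x', hx'per, rfl⟩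
      exact this.trans (le_of_lt hx'mem)
    · refine le_csInf ⟨birk2 (⇑T) (⇑S) f k hXper.choose y, hXper.choose, hXper.choose_spec, rfl⟩ ?_
      rintro t ⟨x, -, rfl⟩
      exact ciInf_le (hbbR k y) x
  -- the key pointwise (in k) identity
  have key : ∀ k : ℕ,
      (⨆ y : Y, ⨅ x : X, birk2 (⇑T) (⇑S) f k x y)
      = sSup {r | ∃ y ∈ perPts (⇑S),
          r = sInf {t | ∃ x ∈ perPts (⇑T), t = birk2 (⇑T) (⇑S) f k x y}} := by
    intro k
    have hseq : {r | ∃ y ∈ perPts (⇑S),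
        r = sInf {t | ∃ x ∈ perPts (⇑T), t = birk2 (⇑T) (⇑S) f k x y}}
        = {r | ∃ y ∈ perPts (⇑S), r = h k y} := by
      ext r
      constructor
      · rintro ⟨y, hy, rfl⟩; exact ⟨y, hy, hA k y⟩
      · rintro ⟨y, hy, rfl⟩; exact ⟨y, hy, (hA k y).symm⟩
    rw [hseq]
    have hbAh : BddAbove (Set.range (h k)) :=
      ⟨C, by rintro r ⟨y, rfl⟩; exact hh_ub k y⟩
    have hbAP : BddAbove {r | ∃ y ∈ perPts (⇑S), r = h k y} := by
      refine ⟨C, ?_⟩; rintro r ⟨y, -, rfl⟩; exact hh_ub k y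
    apply le_antisymm
    · apply le_of_forall_pos_le_add
      intro ε hε
      have hlt : (⨆ y : Y, h k y) - ε / 2 < ⨆ y : Y, h k y :=
        sub_lt_self _ (by linarith)
      obtain ⟨y, hy⟩ := exists_lt_of_lt_ciSup hlt
      obtain ⟨δ, hδ, hδuc⟩ := Metric.uniformContinuous_iff.mp (hFu k) (ε / 2) (by linarith)
      obtain ⟨y', hy'per, hy'ball⟩ := hdY.exists_mem_open Metric.isOpen_ball
        ⟨y, Metric.mem_ball_self hδ⟩
      have hclose : ∀ x : X, |birk2 (⇑T) (⇑S) f k x y' - birk2 (⇑T) (⇑S) f k x y| < ε / 2 := by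
        intro x
        have hd : dist ((x, y') : X × Y) (x, y) < δ := by
          rw [Prod.dist_eq, dist_self]
          exact max_lt hδ (Metric.mem_ball.mp hy'ball)
        have := hδuc hd
        rwa [Real.dist_eq] at this
      have hy'ge : h k y - ε / 2 ≤ h k y' := by
        refine le_ciInf fun x => ?_
        have h1 : h k y ≤ birk2 (⇑T) (⇑S) f k x y := ciInf_le (hbbR k y) x
        have h2 := abs_lt.mp (hclose x)
        linarith [h2.1]
      have hsup : h k y' ≤ sSup {r | ∃ y ∈ perPts (⇑S), r = h k y} :=
        le_csSup hbAP ⟨y', hy'per, rfl⟩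
      linarith
    · refine csSup_le ⟨h k hYper.choose, hYper.choose, hYper.choose_spec, rfl⟩ ?_
      rintro r ⟨y, -, rfl⟩
      exact le_ciSup hbAh y
  simp only [delta2, deltaPer2]
  congr 1
  funext k
  exact key k
end
end

section
/- Let (r_k)_{k=1}^∞ be a sequence of real numbers with the following property: for every ε > 0 there exists K = K(ε) ∈ ℕ such that for every k ∈ ℕ, if k_1, …, k_n are natural numbers with k_1, …, k_n ≥ K and k = k_1 + ⋯ + k_n, then r_k ≤ r_{k_1} + ⋯ + r_{k_n} + kε. Then lim_{k→∞} r_k / k exists (as a real number or −∞). -/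
/-!
Fix `ε > 0`, its `K`, and any `m ≥ K`. Splitting `k = m + ⋯ + m + ρ` with `m ≤ ρ < 2m` gives
`r_k / k ≤ r_m / m + 2ε` for all large `k`, since the finitely many remainders `ρ` only
contribute `O(1/k)`. Hence `limsup r_k / k ≤ r_m / m + 2ε` for every large `m`: either the
sequence is unbounded below, and then it tends to `−∞`, or taking `m` with `r_m / m` close to
the liminf gives `limsup ≤ liminf`.
-/

open Filter Topology

theorem tendsto_or_tendsto_atBot_of_eventually_le_add {u : ℕ → ℝ}
    (hu : ∀ ε > 0, ∀ᶠ m in atTop, ∀ᶠ k in atTop, u k ≤ u m + ε) :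
    (∃ L, Tendsto u atTop (𝓝 L)) ∨ Tendsto u atTop atBot := by
  have hbdd_above : IsBoundedUnder (· ≤ ·) atTop u := by
    obtain ⟨m, hm⟩ := (hu 1 one_pos).exists
    exact ⟨u m + 1, hm⟩
  by_cases hbdd_below : IsBoundedUnder (· ≥ ·) atTop u
  · left
    have hlimsup_le : limsup u atTop ≤ liminf u atTop := by
      refine le_of_forall_pos_le_add fun ε hε => ?_
      have hfreq : ∃ᶠ m in atTop, u m < liminf u atTop + ε / 2 :=
        frequently_lt_of_liminf_lt hbdd_above.isCoboundedUnder_ge (by linarith)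
      obtain ⟨m, hm_lt, hm⟩ := (hfreq.and_eventually (hu (ε / 2) (half_pos hε))).exists
      calc limsup u atTop ≤ u m + ε / 2 := limsup_le_of_le hbdd_below.isCoboundedUnder_le hm
        _ ≤ liminf u atTop + ε := by linarith
    exact ⟨_, tendsto_of_liminf_eq_limsup
      (le_antisymm (liminf_le_limsup hbdd_above hbdd_below) hlimsup_le) rfl
      hbdd_above hbdd_below⟩
  · right
    refine tendsto_atBot.2 fun c => ?_
    have hfreq : ∃ᶠ m in atTop, u m ≤ c - 1 := fun h =>
      hbdd_below ⟨c - 1, h.mono fun m hm => (not_le.1 hm).le⟩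
    obtain ⟨m, hm_le, hm⟩ := (hfreq.and_eventually (hu 1 one_pos)).exists
    filter_upwards [hm] with k hk
    linarith

theorem map_mul_add_le_of_forall_sum_le (r : ℕ → ℝ) {K : ℕ} {ε : ℝ}
    (hK : ∀ (k : ℕ) (n : ℕ) (ks : Fin (n + 1) → ℕ),
      (∀ i, K ≤ ks i) → k = ∑ i, ks i → r k ≤ (∑ i, r (ks i)) + (k : ℝ) * ε)
    {m ρ : ℕ} (hm : K ≤ m) (hρ : K ≤ ρ) (q : ℕ) :
    r (q * m + ρ) ≤ q * r m + r ρ + ((q * m + ρ : ℕ) : ℝ) * ε := by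
  have key := hK (q * m + ρ) q (Fin.snoc (fun _ => m) ρ)
    (Fin.lastCases (by simpa using hρ) (by simpa using fun _ => hm))
    (by simp [Fin.sum_univ_castSucc])
  simpa [Fin.sum_univ_castSucc] using key

theorem eventually_div_le_div_add (r : ℕ → ℝ) {m : ℕ} (hm : 0 < m) {ε : ℝ} (hε : 0 < ε)
    (hr : ∀ q ρ, m ≤ ρ → r (q * m + ρ) ≤ q * r m + r ρ + ((q * m + ρ : ℕ) : ℝ) * ε) :
    ∀ᶠ k : ℕ in atTop, r k / k ≤ r m / m + 2 * ε := by
  set x := r m / m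
  have hrm : r m = m * x := (mul_div_cancel₀ _ (by positivity)).symm
  obtain ⟨C, hC⟩ : BddAbove ((fun ρ : ℕ => r ρ - ρ * x) '' Set.Iio (2 * m)) :=
    ((Set.finite_Iio _).image _).bddAbove
  have hbound : ∀ k ≥ m, r k ≤ k * (x + ε) + C := by
    intro k hk
    obtain ⟨q, hq⟩ : ∃ q, k / m = q + 1 := ⟨k / m - 1, by have := Nat.div_pos hk hm; omega⟩
    set ρ := k % m + m
    have hk_eq : q * m + ρ = k := by
      have := Nat.div_add_mod' k m
      rw [hq, add_mul, one_mul] at this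
      omega
    have hρ_lt : ρ < 2 * m := by have := Nat.mod_lt k hm; omega
    have hρ : r ρ - ρ * x ≤ C := hC ⟨ρ, hρ_lt, rfl⟩
    have hqm : (q : ℝ) * r m = (k - ρ) * x := by
      rw [hrm, ← hk_eq]; push_cast; ring
    have := hr q ρ le_add_self
    rw [hk_eq] at this
    linarith
  have hC_div : ∀ᶠ k : ℕ in atTop, C / k ≤ ε :=
    (tendsto_const_div_atTop_nhds_zero_nat C).eventually (eventually_le_nhds hε)
  filter_upwards [eventually_ge_atTop m, hC_div] with k hk hCk
  have hk_pos : (0 : ℝ) < k := by exact_mod_cast hm.trans_le hk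
  rw [div_le_iff₀ hk_pos] at hCk ⊢
  linarith [hbound k hk]

/-- a generalization of Fekete's subadditivity lemma: if for every
`ε > 0` there is `K = K(ε) ∈ ℕ` such that whenever `k = k₁ + ⋯ + kₙ` with all
`kᵢ ≥ K`, one has `r_k ≤ r_{k₁} + ⋯ + r_{kₙ} + kε`, then `lim_{k→∞} r_k / k`
exists (as a real number, or is `−∞`). -/
theorem stmt11 (r : ℕ → ℝ)
    (h : ∀ ε : ℝ, 0 < ε → ∃ K : ℕ, ∀ (k : ℕ) (n : ℕ) (ks : Fin (n + 1) → ℕ),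
      (∀ i, K ≤ ks i) → k = ∑ i, ks i →
      r k ≤ (∑ i, r (ks i)) + (k : ℝ) * ε) :
    (∃ L : ℝ, Tendsto (fun k : ℕ => r k / (k : ℝ)) atTop (𝓝 L)) ∨
      Tendsto (fun k : ℕ => r k / (k : ℝ)) atTop atBot := by
  refine tendsto_or_tendsto_atBot_of_eventually_le_add fun ε hε => ?_
  obtain ⟨K, hK⟩ := h (ε / 2) (half_pos hε)
  filter_upwards [eventually_ge_atTop (max K 1)] with m hm
  have hm_pos : 0 < m := by omega
  have hmK : K ≤ m := by omega
  refine (eventually_div_le_div_add r hm_pos (half_pos hε) fun q ρ hρ =>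
    map_mul_add_le_of_forall_sum_le r hK hmK (hmK.trans hρ) q).mono fun k hk => ?_
  linarith
end

section
/- Let (X, T) and (Y, S) be topological dynamical systems and π_Y : X × Y → Y the second-coordinate projection. Let y_0 ∈ Y satisfy S^{s_0} y_0 = y_0 for some s_0 ∈ ℕ, and set ν = (1/s_0) Σ_{j=0}^{s_0−1} δ_{S^j y_0}. Then { λ ∈ M_{T×S}(X × Y) : (π_Y)_* λ = ν } = { (1/s_0) Σ_{j=0}^{s_0−1} (T × S)^j_* (μ × δ_{y_0}) : μ ∈ M_{T^{s_0}}(X) }. Consequently, for every f ∈ C(X × Y), ψ_f(ν) ≥ min_{x ∈ X} (1/s_0) Σ_{j=0}^{s_0−1} f(T^j x, S^j y_0). -/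
/-!
A `(T × S)`-invariant measure `m` with marginal `ν` lives on the fibres `X × {Sⁱ y₀}`, `i < p`,
over the orbit of `y₀` (`p` its minimal period). As `S` is injective, `T × S` carries the
restriction of `m` to one fibre onto its restriction to the next, so `m` is the average of the
pushforwards of its restriction `κ × δ_{y₀}` to the fibre over `y₀`, and `κ` is
`T^{s₀}`-invariant because `S^{s₀} y₀ = y₀`. Integrating `f` against such an average gives the
`μ`-integral of the Birkhoff average `A_{s₀} f(·, y₀)`, which is at least its minimum; the
infimum defining `ψ_f(ν)` runs over a nonempty set by the Krylov–Bogolyubov theorem for `T^{s₀}`.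
-/

open MeasureTheory Filter Topology
open scoped ENNReal NNReal

noncomputable section

open BoundedContinuousFunction Function

theorem Function.Periodic.sum_range_mul {M : Type*} [AddCommMonoid M] {u : ℕ → M} {p : ℕ}
    (hu : Periodic u p) (q : ℕ) :
    ∑ j ∈ Finset.range (p * q), u j = q • ∑ j ∈ Finset.range p, u j := by
  induction q with
  | zero => simp
  | succ q ih =>
    rw [Nat.mul_succ, Finset.sum_range_add, ih, succ_nsmul]
    congr 1
    refine Finset.sum_congr rfl fun j _ => ?_
    rw [add_comm, mul_comm]
    exact hu.nat_mul q j

namespace MeasureTheory.Measure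

variable {α β : Type*} [MeasurableSpace α] [MeasurableSpace β]

theorem eq_sum_restrict_preimage_singleton [MeasurableSingletonClass β] {m : Measure α}
    {f : α → β} (hf : Measurable f) {s : Finset β} (hs : ∀ᵐ a ∂m, f a ∈ s) :
    m = ∑ b ∈ s, m.restrict (f ⁻¹' {b}) := by
  rw [← sum_coe_finset, ← restrict_biUnion_finset (Set.pairwiseDisjoint_fiber f s)
    fun b => hf (measurableSet_singleton b), Finset.set_biUnion_preimage_singleton]
  exact (restrict_eq_self_of_ae_mem (s := f ⁻¹' s) hs).symm

theorem eq_prod_dirac_of_ae_snd_eq {κ : Measure (α × β)} [SFinite κ] {b : β}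
    (h : ∀ᵐ z ∂κ, z.2 = b) : κ = (κ.map Prod.fst).prod (dirac b) := by
  rw [prod_dirac, map_map measurable_prodMk_right measurable_fst]
  conv_lhs => rw [← map_id (μ := κ)]
  refine map_congr (h.mono fun z hz => ?_)
  simp [← hz]

theorem map_restrict_of_preimage_eq {m : Measure α} {f : α → α} (hm : MeasurePreserving f m m)
    {s t : Set α} (ht : MeasurableSet t) (hst : f ⁻¹' t = s) :
    (m.restrict s).map f = m.restrict t := by
  rw [← hst, ← restrict_map hm.measurable ht, hm.map_eq]

end MeasureTheory.Measure

theorem BoundedContinuousFunction.iInf_le_integral {X : Type*} [TopologicalSpace X]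
    [MeasurableSpace X] [OpensMeasurableSpace X] (μ : Measure X) [IsProbabilityMeasure μ]
    (g : X →ᵇ ℝ) : ⨅ x, g x ≤ ∫ x, g x ∂μ :=
  calc ⨅ x, g x = ∫ _, ⨅ x, g x ∂μ := by simp
    _ ≤ ∫ x, g x ∂μ :=
      integral_mono (integrable_const _) (g.integrable μ) (ciInf_le g.isBounded_range.bddBelow)

section KrylovBogolyubov

variable {Z : Type*} [TopologicalSpace Z] [MeasurableSpace Z]

-- Averaging over `n + 1` points, so that no average is empty.
def orbitAverage (g : Z → Z) (z : Z) (n : ℕ) : ProbabilityMeasure Z :=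
  ⟨((n + 1 : ℕ) : ℝ≥0∞)⁻¹ • ∑ k ∈ Finset.range (n + 1), Measure.dirac (g^[k] z), ⟨by
    simp [Measure.finsetSum_apply, ENNReal.inv_mul_cancel]⟩⟩

variable [OpensMeasurableSpace Z]

lemma integral_orbitAverage (g : Z → Z) (z : Z) (n : ℕ) (f : Z →ᵇ ℝ) :
    ∫ x, f x ∂(orbitAverage g z n : Measure Z)
      = ((n + 1 : ℕ) : ℝ)⁻¹ * ∑ k ∈ Finset.range (n + 1), f (g^[k] z) := by
  rw [orbitAverage, ProbabilityMeasure.coe_mk, integral_smul_measure,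
    integral_finsetSum_measure fun k _ => f.integrable _]
  simp only [integral_dirac' _ _ f.continuous.stronglyMeasurable, ENNReal.toReal_inv,
    ENNReal.toReal_natCast, smul_eq_mul]

lemma tendsto_integral_comp_sub_integral_orbitAverage {g : Z → Z} (hg : Continuous g) (z : Z)
    (f : Z →ᵇ ℝ) :
    Tendsto (fun n => ∫ x, f (g x) ∂(orbitAverage g z n : Measure Z)
      - ∫ x, f x ∂(orbitAverage g z n : Measure Z)) atTop (𝓝 0) := by
  have htelescope : ∀ n, ∫ x, f (g x) ∂(orbitAverage g z n : Measure Z)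
      - ∫ x, f x ∂(orbitAverage g z n : Measure Z)
        = (f (g^[n + 1] z) - f z) / ((n + 1 : ℕ) : ℝ) := by
    intro n
    have := integral_orbitAverage g z n (f.compContinuous ⟨g, hg⟩)
    simp only [compContinuous_apply, ContinuousMap.coe_mk, ← iterate_succ_apply' g] at this
    rw [this, integral_orbitAverage, ← mul_sub, div_eq_inv_mul, ← Finset.sum_sub_distrib,
      Finset.sum_range_sub (fun k => f (g^[k] z)), iterate_zero_apply]
  simp_rw [htelescope]
  refine squeeze_zero_norm (fun n => ?_) ((tendsto_const_div_atTop_nhds_zero_nat (2 * ‖f‖)).comp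
    (tendsto_add_atTop_nat 1))
  rw [norm_div, Real.norm_natCast, comp_apply, Nat.cast_add_one]
  gcongr
  exact (norm_sub_le _ _).trans
    (by linarith [f.norm_coe_le_norm (g^[n + 1] z), f.norm_coe_le_norm z])

variable [BorelSpace Z] [HasOuterApproxClosed Z] [T2Space Z] [CompactSpace Z] [Nonempty Z]

-- Krylov–Bogolyubov: a weak limit of the orbit averages along an ultrafilter is invariant,
-- since integrating `f ∘ g - f` against the `n`-th average telescopes to `O(1/n)`.
theorem exists_isProbabilityMeasure_map_eq {g : Z → Z} (hg : Continuous g) :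
    ∃ μ : Measure Z, IsProbabilityMeasure μ ∧ μ.map g = μ := by
  obtain ⟨z⟩ := ‹Nonempty Z›
  set U : Ultrafilter ℕ := hyperfilter ℕ
  obtain ⟨μ, -, hμ⟩ := isCompact_univ.ultrafilter_le_nhds (U.map (orbitAverage g z))
    (by simp)
  have hlim : Tendsto (orbitAverage g z) U (𝓝 μ) := hμ
  refine ⟨μ, inferInstance, ext_of_forall_integral_eq_of_IsFiniteMeasure fun f => ?_⟩
  have hU : (U : Filter ℕ) ≤ atTop := Nat.cofinite_eq_atTop ▸ hyperfilter_le_cofinite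
  have hcomp := ProbabilityMeasure.continuous_integral_boundedContinuousFunction
    (f.compContinuous ⟨g, hg⟩)
  have hf := ProbabilityMeasure.continuous_integral_boundedContinuousFunction f
  have h := ((hcomp.tendsto μ).comp hlim).sub ((hf.tendsto μ).comp hlim)
  rw [integral_map hg.aemeasurable f.continuous.aestronglyMeasurable,
    ← sub_eq_zero]
  exact tendsto_nhds_unique h
    ((tendsto_integral_comp_sub_integral_orbitAverage hg z f).mono_left hU)

end KrylovBogolyubov

section PeriodicOrbit

variable {X Y : Type*} [MeasurableSpace X] [MeasurableSpace Y]

def orbitMeasure (S : Y → Y) (y₀ : Y) (s : ℕ) : Measure Y :=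
  (s : ℝ≥0∞)⁻¹ • ∑ j ∈ Finset.range s, Measure.dirac (S^[j] y₀)

def orbitLift (T : X → X) (S : Y → Y) (y₀ : Y) (s : ℕ) (μ : Measure X) : Measure (X × Y) :=
  (s : ℝ≥0∞)⁻¹ • ∑ j ∈ Finset.range s,
    Measure.map ((Prod.map T S)^[j]) (μ.prod (Measure.dirac y₀))

variable {T : X → X} {S : Y → Y} {y₀ : Y} {s : ℕ} {μ : Measure X}

theorem map_iterate_prod_dirac (hT : Measurable T) (hS : Measurable S) [SFinite μ] (j : ℕ) :
    (μ.prod (Measure.dirac y₀)).map ((Prod.map T S)^[j])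
      = (μ.map T^[j]).prod (Measure.dirac (S^[j] y₀)) := by
  rw [Prod.map_iterate, ← Measure.map_prod_map _ _ (hT.iterate j) (hS.iterate j),
    Measure.map_dirac' (hS.iterate j)]

theorem orbitLift_eq_sum_prod (hT : Measurable T) (hS : Measurable S) [SFinite μ] :
    orbitLift T S y₀ s μ
      = (s : ℝ≥0∞)⁻¹ • ∑ j ∈ Finset.range s, (μ.map T^[j]).prod (Measure.dirac (S^[j] y₀)) := by
  simp only [orbitLift, map_iterate_prod_dirac hT hS]

theorem orbitLift_apply_univ (hT : Measurable T) (hS : Measurable S) (hs : s ≠ 0)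
    [SFinite μ] : orbitLift T S y₀ s μ Set.univ = μ Set.univ := by
  have hj : ∀ j, (μ.map T^[j]).prod (Measure.dirac (S^[j] y₀)) Set.univ = μ Set.univ := by
    intro j
    rw [← Set.univ_prod_univ, Measure.prod_prod, measure_univ (μ := Measure.dirac _), mul_one,
      Measure.map_apply (hT.iterate j) MeasurableSet.univ, Set.preimage_univ]
  rw [orbitLift_eq_sum_prod hT hS, Measure.smul_apply, Measure.finsetSum_apply,
    Finset.sum_congr rfl fun j _ => hj j, Finset.sum_const, Finset.card_range, nsmul_eq_mul,
    smul_eq_mul, ← mul_assoc,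
    ENNReal.inv_mul_cancel (Nat.cast_ne_zero.mpr hs) (ENNReal.natCast_ne_top s), one_mul]

theorem isProbabilityMeasure_orbitLift (hT : Measurable T) (hS : Measurable S) (hs : s ≠ 0)
    [IsProbabilityMeasure μ] : IsProbabilityMeasure (orbitLift T S y₀ s μ) :=
  ⟨(orbitLift_apply_univ hT hS hs).trans measure_univ⟩

theorem map_snd_orbitLift (hT : Measurable T) (hS : Measurable S) [IsProbabilityMeasure μ] :
    (orbitLift T S y₀ s μ).map Prod.snd = orbitMeasure S y₀ s := by
  rw [orbitLift_eq_sum_prod hT hS, Measure.map_smul,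
    Measure.map_finset_sum measurable_snd.aemeasurable]
  simp [orbitMeasure, Measure.map_apply (hT.iterate _) MeasurableSet.univ]

theorem map_orbitLift (hT : Measurable T) (hS : Measurable S) [SFinite μ]
    (hμ : μ.map T^[s] = μ) (hper : S^[s] y₀ = y₀) :
    (orbitLift T S y₀ s μ).map (Prod.map T S) = orbitLift T S y₀ s μ := by
  set u : ℕ → Measure (X × Y) := fun j => (μ.prod (Measure.dirac y₀)).map ((Prod.map T S)^[j])
  have hF : Measurable (Prod.map T S) := hT.prodMap hS
  have hu : ∀ j, (u j).map (Prod.map T S) = u (j + 1) := fun j => by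
    simp only [u, Measure.map_map hF (hF.iterate j), ← iterate_succ']
  have hus : u s = u 0 := by
    simp only [u, map_iterate_prod_dirac hT hS, hμ, hper, iterate_zero, Measure.map_id, id]
  rw [orbitLift, Measure.map_smul, Measure.map_finset_sum hF.aemeasurable]
  change _ • ∑ j ∈ _, (u j).map _ = _ • ∑ j ∈ _, u j
  simp only [hu]
  congr 1
  cases s with
  | zero => simp
  | succ n =>
    rw [Finset.sum_range_succ, Finset.sum_range_succ' u, hus]

theorem integral_orbitLift [TopologicalSpace X] [TopologicalSpace Y]
    [OpensMeasurableSpace (X × Y)] (hT : Measurable T) (hS : Measurable S) [IsFiniteMeasure μ]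
    (f : X × Y →ᵇ ℝ) :
    ∫ z, f z ∂(orbitLift T S y₀ s μ) = ∫ x, birk2 T S f s x y₀ ∂μ := by
  have hφ : ∀ j, Measurable fun x => (Prod.map T S)^[j] (x, y₀) := fun j =>
    ((hT.prodMap hS).iterate j).comp measurable_prodMk_right
  have hmap : ∀ j, (μ.prod (Measure.dirac y₀)).map (Prod.map T S)^[j]
      = μ.map fun x => (Prod.map T S)^[j] (x, y₀) := fun j => by
    rw [Measure.prod_dirac, Measure.map_map ((hT.prodMap hS).iterate j) measurable_prodMk_right]
    rfl
  simp only [orbitLift, hmap]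
  rw [integral_smul_measure, integral_finsetSum_measure fun j _ => f.integrable _]
  simp only [integral_map (hφ _).aemeasurable f.continuous.aestronglyMeasurable, birk2,
    integral_const_mul, ENNReal.toReal_inv, ENNReal.toReal_natCast, smul_eq_mul]
  exact congrArg _ (integral_finsetSum _ fun j _ => (f.integrable _).comp_measurable (hφ j)).symm

variable [MeasurableSingletonClass Y]

theorem map_restrict_preimage_snd (hSinj : Injective S) {m : Measure (X × Y)}
    (hm : MeasurePreserving (Prod.map T S) m m) (y : Y) (j : ℕ) :
    (m.restrict (Prod.snd ⁻¹' {y})).map ((Prod.map T S)^[j])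
      = m.restrict (Prod.snd ⁻¹' {S^[j] y}) := by
  refine Measure.map_restrict_of_preimage_eq (hm.iterate j)
    (measurable_snd (measurableSet_singleton _)) ?_
  ext z
  simp [Prod.map_iterate, (hSinj.iterate j).eq_iff]

theorem eq_sum_restrict_orbit (hs : 0 < s) (hper : S^[s] y₀ = y₀) {m : Measure (X × Y)}
    (hmarg : m.map Prod.snd = orbitMeasure S y₀ s) :
    m = ∑ i ∈ Finset.range (minimalPeriod S y₀), m.restrict (Prod.snd ⁻¹' {S^[i] y₀}) := by
  classical
  set p := minimalPeriod S y₀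
  have hp : 0 < p := IsPeriodicPt.minimalPeriod_pos hs hper
  have horbit : ∀ᵐ z ∂m, z.2 ∈ (Finset.range p).image (S^[·] y₀) := by
    refine ae_of_ae_map measurable_snd.aemeasurable ?_
    rw [hmarg, orbitMeasure, ae_iff]
    simpa using fun j (_ : j < s) => ⟨j % p, Nat.mod_lt j hp, iterate_mod_minimalPeriod_eq⟩
  conv_lhs => rw [Measure.eq_sum_restrict_preimage_singleton measurable_snd horbit]
  rw [Finset.sum_image]
  intro i hi j hj hij
  exact iterate_injOn_Iio_minimalPeriod (by simpa using hi) (by simpa using hj) hij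

theorem exists_eq_orbitLift (hT : Measurable T) (hS : Measurable S) (hSinj : Injective S)
    (hs : 0 < s) (hper : S^[s] y₀ = y₀) {m : Measure (X × Y)} [IsProbabilityMeasure m]
    (hm : MeasurePreserving (Prod.map T S) m m) (hmarg : m.map Prod.snd = orbitMeasure S y₀ s) :
    ∃ μ : Measure X, IsProbabilityMeasure μ ∧ μ.map T^[s] = μ ∧ m = orbitLift T S y₀ s μ := by
  set p := minimalPeriod S y₀
  obtain ⟨q, hpq⟩ : p ∣ s := IsPeriodicPt.minimalPeriod_dvd hper
  set κ := m.restrict (Prod.snd ⁻¹' {y₀})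
  have hκ : κ = (κ.map Prod.fst).prod (Measure.dirac y₀) :=
    Measure.eq_prod_dirac_of_ae_snd_eq
      (ae_restrict_mem (measurable_snd (measurableSet_singleton y₀)))
  have hκmap : ∀ j, κ.map (Prod.map T S)^[j] = m.restrict (Prod.snd ⁻¹' {S^[j] y₀}) :=
    map_restrict_preimage_snd hSinj hm y₀
  -- `κ` has mass `ν {y₀} = 1 / p`.
  set μ := (p : ℝ≥0∞) • κ.map Prod.fst
  have hfibre : Periodic (fun j => m.restrict (Prod.snd ⁻¹' {S^[j] y₀})) p := fun j => by
    simp only [iterate_add_apply, p, iterate_minimalPeriod]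
  have hlift : orbitLift T S y₀ s μ = m := by
    have hμ : μ.prod (Measure.dirac y₀) = (p : ℝ≥0∞) • κ := by
      rw [Measure.prod_smul_left, ← hκ]
    rw [orbitLift, hμ]
    simp only [Measure.map_smul, hκmap]
    rw [← Finset.smul_sum, hpq, hfibre.sum_range_mul, ← eq_sum_restrict_orbit hs hper hmarg,
      ← Nat.cast_smul_eq_nsmul ℝ≥0∞, smul_smul, smul_smul, mul_assoc, ← Nat.cast_mul,
      ENNReal.inv_mul_cancel (by simpa [← hpq] using hs.ne') (ENNReal.natCast_ne_top _),
      one_smul]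
  refine ⟨μ, ⟨?_⟩, ?_, hlift.symm⟩
  · rw [← orbitLift_apply_univ hT hS hs.ne', hlift, measure_univ]
  · have hfst : T^[s] ∘ Prod.fst = Prod.fst ∘ (Prod.map T S)^[s] := by
      funext z
      simp [Prod.map_iterate]
    rw [Measure.map_smul, Measure.map_map (hT.iterate s) measurable_fst, hfst,
      ← Measure.map_map measurable_fst ((hT.prodMap hS).iterate s), hκmap, hper]

theorem invariant_and_map_snd_eq_orbitMeasure_iff (hT : Measurable T) (hS : Measurable S)
    (hSinj : Injective S) (hs : 0 < s) (hper : S^[s] y₀ = y₀) {m : Measure (X × Y)} :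
    (IsProbabilityMeasure m ∧ m.map (Prod.map T S) = m ∧ m.map Prod.snd = orbitMeasure S y₀ s)
      ↔ ∃ μ : Measure X, IsProbabilityMeasure μ ∧ μ.map T^[s] = μ ∧
          m = orbitLift T S y₀ s μ := by
  constructor
  · rintro ⟨hm, hinv, hmarg⟩
    exact exists_eq_orbitLift hT hS hSinj hs hper ⟨hT.prodMap hS, hinv⟩ hmarg
  · rintro ⟨μ, hμ, hinv, rfl⟩
    exact ⟨isProbabilityMeasure_orbitLift hT hS hs.ne', map_orbitLift hT hS hinv hper,
      map_snd_orbitLift hT hS⟩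

end PeriodicOrbit

theorem stmt14_general
    {X Y : Type*}
    [MetricSpace X] [CompactSpace X] [Nonempty X] [MeasurableSpace X] [BorelSpace X]
    [MetricSpace Y] [CompactSpace Y] [MeasurableSpace Y] [BorelSpace Y]
    (T : X ≃ₜ X) (S : Y ≃ₜ Y)
    (y₀ : Y) (s₀ : ℕ) (hs₀ : 0 < s₀) (hper : (⇑S)^[s₀] y₀ = y₀)
    (ν : ProbabilityMeasure Y)
    (hν : ν.toMeasure
      = (s₀ : ℝ≥0∞)⁻¹ • ∑ j ∈ Finset.range s₀, Measure.dirac ((⇑S)^[j] y₀)) :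
    ({m : Measure (X × Y) | IsProbabilityMeasure m ∧
        m.map (Prod.map ⇑T ⇑S) = m ∧ m.map Prod.snd = ν.toMeasure}
      = {m : Measure (X × Y) | ∃ μ : Measure X, IsProbabilityMeasure μ ∧
          μ.map ((⇑T)^[s₀]) = μ ∧
          m = (s₀ : ℝ≥0∞)⁻¹ • ∑ j ∈ Finset.range s₀,
            Measure.map ((Prod.map ⇑T ⇑S)^[j]) (μ.prod (Measure.dirac y₀))}) ∧
    ∀ f : X × Y → ℝ, Continuous f →
      (⨅ x : X, birk2 (⇑T) (⇑S) f s₀ x y₀) ≤ psi2 (⇑T) (⇑S) f ν := by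
  have hT : Measurable T := T.continuous.measurable
  have hS : Measurable S := S.continuous.measurable
  have hν' : ν.toMeasure = orbitMeasure S y₀ s₀ := hν
  have hchar := fun m => hν' ▸
    invariant_and_map_snd_eq_orbitMeasure_iff (m := m) hT hS S.injective hs₀ hper
  refine ⟨Set.ext hchar, fun f hf => ?_⟩
  obtain ⟨μ₀, hμ₀, hμ₀inv⟩ := exists_isProbabilityMeasure_map_eq (T.continuous.iterate s₀)
  obtain ⟨hlam₀, hlam₀inv, hlam₀marg⟩ := (hchar _).2 ⟨μ₀, hμ₀, hμ₀inv, rfl⟩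
  refine le_csInf ⟨_, ⟨_, hlam₀⟩, hlam₀inv, hlam₀marg, rfl⟩ ?_
  rintro r ⟨lam, hinv, hmarg, rfl⟩
  obtain ⟨μ, hμ, -, hlam⟩ := (hchar lam).1 ⟨lam.2, hinv, hmarg⟩
  have hbirk : Continuous fun x => birk2 T S f s₀ x y₀ := by
    unfold birk2
    fun_prop
  rw [hlam]
  exact ((mkOfCompact ⟨_, hbirk⟩).iInf_le_integral μ).trans_eq
    (integral_orbitLift hT hS (mkOfCompact ⟨f, hf⟩)).symm

/-- let `y₀ ∈ Y` have `S^{s₀} y₀ = y₀` and let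
`ν = (1/s₀) Σ_{j<s₀} δ_{S^j y₀}`.  Then the `(T×S)`-invariant probability measures
on `X × Y` with second marginal `ν` are exactly the measures
`(1/s₀) Σ_{j<s₀} (T×S)^j_* (μ × δ_{y₀})` with `μ` a `T^{s₀}`-invariant probability
measure on `X`.  Consequently `ψ_f(ν) ≥ min_{x ∈ X} (1/s₀) Σ_{j<s₀} f(T^j x, S^j y₀)`
for every `f ∈ C(X × Y)`. -/
theorem stmt14
    {X Y : Type*}
    [MetricSpace X] [CompactSpace X] [Nonempty X] [MeasurableSpace X] [BorelSpace X]
    [MetricSpace Y] [CompactSpace Y] [Nonempty Y] [MeasurableSpace Y] [BorelSpace Y]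
    (T : X ≃ₜ X) (S : Y ≃ₜ Y)
    (y₀ : Y) (s₀ : ℕ) (hs₀ : 0 < s₀) (hper : (⇑S)^[s₀] y₀ = y₀)
    (ν : ProbabilityMeasure Y)
    (hν : ν.toMeasure
      = (s₀ : ℝ≥0∞)⁻¹ • ∑ j ∈ Finset.range s₀, Measure.dirac ((⇑S)^[j] y₀)) :
    ({m : Measure (X × Y) | IsProbabilityMeasure m ∧
        m.map (Prod.map ⇑T ⇑S) = m ∧ m.map Prod.snd = ν.toMeasure}
      = {m : Measure (X × Y) | ∃ μ : Measure X, IsProbabilityMeasure μ ∧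
          μ.map ((⇑T)^[s₀]) = μ ∧
          m = (s₀ : ℝ≥0∞)⁻¹ • ∑ j ∈ Finset.range s₀,
            Measure.map ((Prod.map ⇑T ⇑S)^[j]) (μ.prod (Measure.dirac y₀))}) ∧
    ∀ f : X × Y → ℝ, Continuous f →
      (⨅ x : X, birk2 (⇑T) (⇑S) f s₀ x y₀) ≤ psi2 (⇑T) (⇑S) f ν :=
  stmt14_general T S y₀ s₀ hs₀ hper ν hν
end
end

section
/- Let (X, T) and (Y, S) be topological dynamical systems and f ∈ C(X × Y). If (Y, S) has the specification property, then δ(f) ≤ γ(f). -/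
open MeasureTheory Filter Topology
open scoped ENNReal NNReal

noncomputable section

lemma zit_natCast_s15 {Y : Type*} [TopologicalSpace Y] (S : Y ≃ₜ Y) (n : ℕ) (y : Y) :
    zit S (n : ℤ) y = S^[n] y := by
  unfold zit
  rw [zpow_natCast]
  induction n generalizing y with
  | zero => simp
  | succ n ih =>
    rw [pow_succ, Equiv.Perm.mul_apply, Function.iterate_succ_apply]
    exact ih (S y)

lemma zit_zit {Y : Type*} [TopologicalSpace Y] (S : Y ≃ₜ Y) (a b : ℤ) (y : Y) :
    zit S a (zit S b y) = zit S (a + b) y := by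
  unfold zit
  rw [zpow_add, Equiv.Perm.mul_apply]

lemma birk2_abs_le {X Y : Type*} (T : X → X) (S : Y → Y) (f : X × Y → ℝ) {M : ℝ}
    (hM : 0 ≤ M) (hfM : ∀ p, |f p| ≤ M) (k : ℕ) (x : X) (y : Y) :
    |birk2 T S f k x y| ≤ M := by
  rcases Nat.eq_zero_or_pos k with hk | hk
  · simp [birk2, hk, hM]
  have hk0 : (0:ℝ) < (k:ℝ) := by exact_mod_cast hk
  unfold birk2
  rw [abs_mul, abs_inv, abs_of_nonneg (by positivity : (0:ℝ) ≤ (k:ℝ))]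
  rw [inv_mul_le_iff₀ hk0]
  calc |∑ j ∈ Finset.range k, f ((Prod.map T S)^[j] (x, y))|
      ≤ ∑ j ∈ Finset.range k, |f ((Prod.map T S)^[j] (x, y))| := Finset.abs_sum_le_sum_abs _ _
    _ ≤ ∑ _j ∈ Finset.range k, M := Finset.sum_le_sum fun j _ => hfM _
    _ = k * M := by simp [mul_comm]

lemma birk2_split {X Y : Type*} (T : X → X) (S : Y → Y) (f : X × Y → ℝ) (a k : ℕ) (x : X) (y : Y) :
    birk2 T S f (a + k) x y
      = ((a + k : ℕ) : ℝ)⁻¹ * ((a : ℝ) * birk2 T S f a x y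
          + (k : ℝ) * birk2 T S f k (T^[a] x) (S^[a] y)) := by
  have haux : ∀ (m : ℕ) (g : ℕ → ℝ),
      (m:ℝ) * ((m:ℝ)⁻¹ * ∑ j ∈ Finset.range m, g j) = ∑ j ∈ Finset.range m, g j := by
    intro m g
    rcases eq_or_ne m 0 with h | h
    · subst h; simp
    · rw [mul_inv_cancel_left₀ (by exact_mod_cast h)]
  have h1 : ∑ j ∈ Finset.Ico a (a + k), f ((Prod.map T S)^[j] (x, y))
      = ∑ j ∈ Finset.range k, f ((Prod.map T S)^[j] (T^[a] x, S^[a] y)) := by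
    rw [Finset.sum_Ico_eq_sum_range, show a + k - a = k by omega]
    apply Finset.sum_congr rfl
    intro j _
    congr 1
    rw [add_comm a j, Function.iterate_add_apply]
    congr 1
    rw [Prod.map_iterate]
    rfl
  have hsum : ∑ j ∈ Finset.range (a + k), f ((Prod.map T S)^[j] (x, y))
      = ∑ j ∈ Finset.range a, f ((Prod.map T S)^[j] (x, y))
        + ∑ j ∈ Finset.range k, f ((Prod.map T S)^[j] (T^[a] x, S^[a] y)) := by
    rw [Finset.range_eq_Ico, ← Finset.sum_Ico_consecutive _ (Nat.zero_le a) (Nat.le_add_right a k),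
      ← Finset.range_eq_Ico, h1]
  unfold birk2
  rw [hsum, haux a (fun j => f ((Prod.map T S)^[j] (x, y))),
    haux k (fun j => f ((Prod.map T S)^[j] (T^[a] x, S^[a] y)))]

lemma birk2_diff_le {X Y : Type*} (T : X → X) (S : Y → Y) (f : X × Y → ℝ) {ε4 : ℝ}
    (hε : 0 ≤ ε4) (k : ℕ) (x : X) (y1 y2 : Y)
    (h : ∀ j < k, |f ((Prod.map T S)^[j] (x, y1)) - f ((Prod.map T S)^[j] (x, y2))| ≤ ε4) :
    |birk2 T S f k x y1 - birk2 T S f k x y2| ≤ ε4 := by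
  rcases Nat.eq_zero_or_pos k with hk | hk
  · simp [birk2, hk, hε]
  have hk0 : (0:ℝ) < (k:ℝ) := by exact_mod_cast hk
  unfold birk2
  rw [← mul_sub, ← Finset.sum_sub_distrib, abs_mul, abs_inv,
    abs_of_nonneg (by positivity : (0:ℝ) ≤ (k:ℝ)), inv_mul_le_iff₀ hk0]
  calc |∑ j ∈ Finset.range k, (f ((Prod.map T S)^[j] (x, y1)) - f ((Prod.map T S)^[j] (x, y2)))|
      ≤ ∑ j ∈ Finset.range k, |f ((Prod.map T S)^[j] (x, y1)) - f ((Prod.map T S)^[j] (x, y2))| :=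
        Finset.abs_sum_le_sum_abs _ _
    _ ≤ ∑ _j ∈ Finset.range k, ε4 := Finset.sum_le_sum fun j hj => h j (Finset.mem_range.mp hj)
    _ = k * ε4 := by simp [mul_comm]

/-- if `(Y, S)` has the specification property, then `δ(f) ≤ γ(f)`. -/
theorem stmt15
    {X Y : Type*}
    [MetricSpace X] [CompactSpace X] [Nonempty X]
    [MetricSpace Y] [CompactSpace Y] [Nonempty Y]
    (T : X ≃ₜ X) (S : Y ≃ₜ Y) (f : X × Y → ℝ) (hf : Continuous f)
    (hspecY : SpecProp S) :
    delta2 (⇑T) (⇑S) f ≤ gamma2 (⇑T) (⇑S) f := by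
  classical
  obtain ⟨p₀, -, hp₀⟩ := isCompact_univ.exists_isMaxOn Set.univ_nonempty
    (continuous_abs.comp hf).continuousOn
  set M : ℝ := |f p₀| with hMdef
  have hM0 : 0 ≤ M := abs_nonneg _
  have hfM : ∀ p, |f p| ≤ M := fun p => hp₀ (Set.mem_univ p)
  have hB : ∀ (k : ℕ) (x : X) (y : Y), |birk2 (⇑T) (⇑S) f k x y| ≤ M :=
    birk2_abs_le _ _ _ hM0 hfM
  have hbddBelow : ∀ (k : ℕ) (y : Y),
      BddBelow (Set.range fun x : X => birk2 (⇑T) (⇑S) f k x y) := by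
    intro k y
    refine ⟨-M, ?_⟩
    rintro r ⟨x, rfl⟩
    exact (abs_le.mp (hB k x y)).1
  have hInfLB : ∀ (k : ℕ) (y : Y), -M ≤ ⨅ x : X, birk2 (⇑T) (⇑S) f k x y := fun k y =>
    le_ciInf fun x => (abs_le.mp (hB k x y)).1
  have hInfUB : ∀ (k : ℕ) (y : Y), (⨅ x : X, birk2 (⇑T) (⇑S) f k x y) ≤ M := fun k y =>
    ciInf_le_of_le (hbddBelow k y) (Classical.arbitrary X) (abs_le.mp (hB k _ y)).2
  set g : ℕ → ℝ := fun k => ⨆ y : Y, ⨅ x : X, birk2 (⇑T) (⇑S) f k x y with hgdef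
  have hbddAboveg : ∀ k : ℕ,
      BddAbove (Set.range fun y : Y => ⨅ x : X, birk2 (⇑T) (⇑S) f k x y) := by
    intro k
    exact ⟨M, by rintro r ⟨y, rfl⟩; exact hInfUB k y⟩
  have hgUB : ∀ k, g k ≤ M := fun k => ciSup_le fun y => hInfUB k y
  have hgLB : ∀ k, -M ≤ g k := fun k =>
    (hInfLB k (Classical.arbitrary Y)).trans (le_ciSup (hbddAboveg k) _)
  have hLg : delta2 (⇑T) (⇑S) f = limsup g atTop := rfl
  set L : ℝ := delta2 (⇑T) (⇑S) f with hLdef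
  refine le_of_forall_pos_le_add fun ε hε => ?_
  suffices hsuff : L - ε ≤ gamma2 (⇑T) (⇑S) f by linarith
  have hcobdd : IsCoboundedUnder (· ≤ ·) atTop g :=
    (isBoundedUnder_of ⟨-M, fun k => hgLB k⟩ :
      IsBoundedUnder (· ≥ ·) atTop g).isCoboundedUnder_flip
  have hfreq : ∃ᶠ k in atTop, L - ε/4 < g k :=
    frequently_lt_of_lt_limsup hcobdd (by rw [← hLg]; linarith)
  have hpick : ∀ N : ℕ, ∃ ky : ℕ × Y, N ≤ ky.1 ∧
      ∀ x : X, L - ε/2 < birk2 (⇑T) (⇑S) f ky.1 x ky.2 := by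
    intro N
    obtain ⟨k, hkN, hk⟩ := frequently_atTop.mp hfreq N
    have h2 : L - ε/2 < ⨆ y : Y, ⨅ x : X, birk2 (⇑T) (⇑S) f k x y := by
      have : L - ε/2 < g k := by linarith
      exact this
    obtain ⟨y, hy⟩ := exists_lt_of_lt_ciSup h2
    exact ⟨(k, y), hkN, fun x => hy.trans_le (ciInf_le (hbddBelow k y) x)⟩
  obtain ⟨η, hη, hunif⟩ : ∃ η > 0, ∀ p q : X × Y, dist p q < η → |f p - f q| ≤ ε/4 := by
    obtain ⟨δ, hδ, hu⟩ := Metric.uniformContinuous_iff.mp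
      (CompactSpace.uniformContinuous_of_continuous hf) (ε/4) (by positivity)
    refine ⟨δ, hδ, fun p q hpq => ?_⟩
    have := hu hpq
    rw [Real.dist_eq] at this
    exact this.le
  obtain ⟨D, hD, hspec⟩ := hspecY (η/2) (by positivity)
  set c : ℕ := ⌈4 * (M + |L| + 1) / ε⌉₊ with hcdef
  obtain ⟨A, K, Yv, hA, hKY, hK1⟩ : ∃ (A K : ℕ → ℕ) (Yv : ℕ → Y),
      (∀ i, A (i + 1) = A i + K i + D) ∧
      (∀ (i : ℕ) (x : X), L - ε/2 < birk2 (⇑T) (⇑S) f (K i) x (Yv i)) ∧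
      (∀ i, A i * c + 1 ≤ K i) := by
    refine ⟨fun i => Nat.rec 0 (fun _ a => a + (hpick (a * c + 1)).choose.1 + D) i,
      fun i => (hpick ((Nat.rec 0 (fun _ a => a + (hpick (a * c + 1)).choose.1 + D) i
        : ℕ) * c + 1)).choose.1,
      fun i => (hpick ((Nat.rec 0 (fun _ a => a + (hpick (a * c + 1)).choose.1 + D) i
        : ℕ) * c + 1)).choose.2,
      fun i => rfl, fun i => (hpick _).choose_spec.2, fun i => (hpick _).choose_spec.1⟩
  have htrace : ∀ m : ℕ, ∃ z : Y, ∀ i ≤ m, ∀ t < K i,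
      dist ((⇑S)^[A i + t] z) ((⇑S)^[t] (Yv i)) < η/2 := by
    intro m
    have hab : ∀ i : Fin (m+1), ((A i.val : ℤ)) ≤ (A i.val : ℤ) + (K i.val : ℤ) - 1 := by
      intro i
      have := hK1 i.val
      omega
    have hgap : ∀ i : Fin m, (D : ℤ) ≤ ((A i.succ.val : ℤ)) -
        ((A i.castSucc.val : ℤ) + (K i.castSucc.val : ℤ) - 1) := by
      intro i
      rw [Fin.val_succ, Fin.coe_castSucc, hA i.val]
      push_cast
      omega
    obtain ⟨z, hz⟩ := hspec m (fun i : Fin (m+1) => zit S (-(A i.val : ℤ)) (Yv i.val))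
      (fun i => (A i.val : ℤ)) (fun i => (A i.val : ℤ) + (K i.val : ℤ) - 1)
      hab hgap
    refine ⟨z, fun i hi t ht => ?_⟩
    have h := hz ⟨i, Nat.lt_succ_of_le hi⟩ ((A i + t : ℕ) : ℤ)
      (show ((A i : ℕ) : ℤ) ≤ ((A i + t : ℕ) : ℤ) by push_cast; omega)
      (show ((A i + t : ℕ) : ℤ) ≤ ((A i : ℕ) : ℤ) + ((K i : ℕ) : ℤ) - 1 by
        push_cast; omega)
    rw [zit_natCast_s15, zit_zit,
      show ((A i + t : ℕ) : ℤ) + -((A i : ℕ) : ℤ) = ((t : ℕ) : ℤ) from by push_cast; ring,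
      zit_natCast_s15] at h
    exact h
  choose zf hzf using htrace
  obtain ⟨ystar, -, φ, hφ, hlim⟩ :=
    isCompact_univ.tendsto_subseq (x := zf) fun n => Set.mem_univ (zf n)
  have htr : ∀ i t, t < K i → dist ((⇑S)^[A i + t] ystar) ((⇑S)^[t] (Yv i)) ≤ η/2 := by
    intro i t ht
    have hcont : Continuous fun y : Y => dist ((⇑S)^[A i + t] y) ((⇑S)^[t] (Yv i)) :=
      Continuous.dist (S.continuous.iterate _) continuous_const
    have hc : Tendsto (fun l => dist ((⇑S)^[A i + t] (zf (φ l))) ((⇑S)^[t] (Yv i))) atTop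
        (𝓝 (dist ((⇑S)^[A i + t] ystar) ((⇑S)^[t] (Yv i)))) := (hcont.tendsto ystar).comp hlim
    refine le_of_tendsto hc ?_
    filter_upwards [eventually_ge_atTop i] with l hl
    exact (hzf (φ l) i (hl.trans hφ.le_apply) t ht).le
  have hmain : ∀ (x : X) (i : ℕ), L - ε ≤ birk2 (⇑T) (⇑S) f (A i + K i) x ystar := by
    intro x i
    have hW : L - 3*(ε/4) ≤ birk2 (⇑T) (⇑S) f (K i) ((⇑T)^[A i] x) ((⇑S)^[A i] ystar) := by
      have hdiff : |birk2 (⇑T) (⇑S) f (K i) ((⇑T)^[A i] x) ((⇑S)^[A i] ystar)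
          - birk2 (⇑T) (⇑S) f (K i) ((⇑T)^[A i] x) (Yv i)| ≤ ε/4 := by
        apply birk2_diff_le _ _ _ (by positivity)
        intro j hj
        apply hunif
        rw [Prod.map_iterate]
        have hdp : dist (Prod.map ((⇑T)^[j]) ((⇑S)^[j]) (((⇑T)^[A i] x), ((⇑S)^[A i] ystar)))
            (Prod.map ((⇑T)^[j]) ((⇑S)^[j]) (((⇑T)^[A i] x), (Yv i)))
            = dist ((⇑S)^[j] ((⇑S)^[A i] ystar)) ((⇑S)^[j] (Yv i)) := by
          rw [Prod.dist_eq]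
          show max (dist ((⇑T)^[j] ((⇑T)^[A i] x)) ((⇑T)^[j] ((⇑T)^[A i] x)))
            (dist ((⇑S)^[j] ((⇑S)^[A i] ystar)) ((⇑S)^[j] (Yv i))) = _
          rw [dist_self, max_eq_right dist_nonneg]
        rw [hdp, ← Function.iterate_add_apply]
        calc dist ((⇑S)^[j + A i] ystar) ((⇑S)^[j] (Yv i))
            = dist ((⇑S)^[A i + j] ystar) ((⇑S)^[j] (Yv i)) := by rw [add_comm j (A i)]
          _ ≤ η/2 := htr i j hj
          _ < η := by linarith
      have h2 := hKY i ((⇑T)^[A i] x)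
      have h3 := abs_le.mp hdiff
      linarith
    have hsplit := birk2_split (⇑T) (⇑S) f (A i) (K i) x ystar
    have hBa := abs_le.mp (hB (A i) x ystar)
    have hK1i := hK1 i
    have hkc : (A i : ℝ) * (c : ℝ) ≤ (K i : ℝ) := by
      have : A i * c ≤ K i := by omega
      exact_mod_cast this
    have hcQ : 4 * (M + |L| + 1) / ε ≤ (c : ℝ) := Nat.le_ceil _
    have ha0 : (0:ℝ) ≤ (A i : ℝ) := Nat.cast_nonneg _
    have hak : (A i : ℝ) * (4 * (M + |L| + 1)) ≤ (K i : ℝ) * ε := by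
      calc (A i : ℝ) * (4 * (M + |L| + 1))
          = (A i : ℝ) * (4 * (M + |L| + 1) / ε) * ε := by field_simp
        _ ≤ (A i : ℝ) * (c : ℝ) * ε :=
            mul_le_mul_of_nonneg_right (mul_le_mul_of_nonneg_left hcQ ha0) hε.le
        _ ≤ (K i : ℝ) * ε := mul_le_mul_of_nonneg_right hkc hε.le
    rw [hsplit]
    have hn : (0:ℝ) < ((A i + K i : ℕ) : ℝ) := by
      have : 0 < A i + K i := by omega
      exact_mod_cast this
    rw [inv_mul_eq_div, le_div_iff₀ hn]
    have t1 : (A i : ℝ) * (-M) ≤ (A i : ℝ) * birk2 (⇑T) (⇑S) f (A i) x ystar :=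
      mul_le_mul_of_nonneg_left hBa.1 ha0
    have t2 : (K i : ℝ) * (L - 3*(ε/4)) ≤
        (K i : ℝ) * birk2 (⇑T) (⇑S) f (K i) ((⇑T)^[A i] x) ((⇑S)^[A i] ystar) :=
      mul_le_mul_of_nonneg_left hW (Nat.cast_nonneg _)
    have t3 : (A i : ℝ) * L ≤ (A i : ℝ) * |L| :=
      mul_le_mul_of_nonneg_left (le_abs_self L) ha0
    have t4 : (0:ℝ) ≤ (A i : ℝ) * ε := mul_nonneg ha0 hε.le
    push_cast
    linarith [t1, t2, t3, t4, hak, ha0]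
  have hAge : ∀ i, i ≤ A i := by
    intro i
    induction i with
    | zero => exact Nat.zero_le _
    | succ n ih => rw [hA n]; omega
  have hfr : ∀ x : X, ∃ᶠ n in atTop, L - ε ≤ birk2 (⇑T) (⇑S) f n x ystar := by
    intro x
    rw [frequently_atTop]
    intro N
    exact ⟨A N + K N, by have := hAge N; omega, hmain x N⟩
  have hls : ∀ x : X, L - ε ≤ limsup (fun n : ℕ => birk2 (⇑T) (⇑S) f n x ystar) atTop :=
    fun x => le_limsup_of_frequently_le (hfr x)
      (isBoundedUnder_of ⟨M, fun n => (abs_le.mp (hB n x ystar)).2⟩)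
  have hlimsupUB : ∀ (x : X) (y : Y),
      limsup (fun n : ℕ => birk2 (⇑T) (⇑S) f n x y) atTop ≤ M := by
    intro x y
    refine limsup_le_of_le ?_ (Filter.Eventually.of_forall fun n => (abs_le.mp (hB n x y)).2)
    exact (isBoundedUnder_of ⟨-M, fun n => (abs_le.mp (hB n x y)).1⟩ :
      IsBoundedUnder (· ≥ ·) atTop _).isCoboundedUnder_flip
  have hlimsupLB : ∀ (x : X) (y : Y),
      -M ≤ limsup (fun n : ℕ => birk2 (⇑T) (⇑S) f n x y) atTop := by
    intro x y
    exact le_limsup_of_frequently_le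
      (Frequently.of_forall fun n => (abs_le.mp (hB n x y)).1)
      (isBoundedUnder_of ⟨M, fun n => (abs_le.mp (hB n x y)).2⟩)
  have hfinal : L - ε ≤ ⨅ x : X, limsup (fun n : ℕ => birk2 (⇑T) (⇑S) f n x ystar) atTop :=
    le_ciInf hls
  refine hfinal.trans ?_
  have hbdd : BddAbove (Set.range fun y : Y =>
      ⨅ x : X, limsup (fun k : ℕ => birk2 (⇑T) (⇑S) f k x y) atTop) := by
    refine ⟨M, ?_⟩
    rintro r ⟨y, rfl⟩
    exact ciInf_le_of_le ⟨-M, by rintro r ⟨x, rfl⟩; exact hlimsupLB x y⟩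
      (Classical.arbitrary X) (hlimsupUB _ y)
  exact le_ciSup hbdd ystar
end
end
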